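/- arXiv:1505.03396 — 9 statements merged into one kernel-verified Lean document; each statement's English description precedes it below -/
import Mathlib

section
/- Let G be a finite simple graph, let C be a proper coloring of G with χ(G) colors, and let C₁ be one of its color classes. Let 𝒢 be the subgroup of Aut(G) consisting of all automorphisms A with A(C₁) = C₁ (setwise), assume 𝒢 is nontrivial, and let r be the least prime dividing |𝒢|. For A ∈ 𝒢 let θ_A denote the number of distinct orbits induced by A on C₁ (i.e., orbits of the cyclic group generated by A acting on C₁). If for some integer t ≥ 2 one has Σ_{A ∈ 𝒢} t^(θ_A − |C₁|) < r, then χ_D(G) ≤ χ(G) + t − 1. -/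
/-!
Count the colorings `f : C₁ → Fin t`. An automorphism `σ ∈ 𝒢` fixes at most `t ^ θ_σ` of them,
so the hypothesis says that there are fewer than `r * t ^ |C₁|` pairs `(σ, f)` with `σ` fixing `f`.
Counting the same pairs by `f` instead, every nontrivial stabilizer of a coloring is a subgroup
of `𝒢` and has order at least `r`; hence some `f` has trivial stabilizer in `𝒢`. Recoloring `C₁`
by `f` with `t` fresh colors in place of `c` gives a proper coloring with `χ(G) - 1 + t` colors,
and an automorphism preserving its color classes preserves `C₁` and `f`, so it is the identity.
-/

/-- A permutation of the vertices is an automorphism of the simple graph `G` if it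
preserves adjacency (and hence non-adjacency). -/
def IsGraphAutomorphism {V : Type*} (G : SimpleGraph V) (σ : Equiv.Perm V) : Prop :=
  ∀ u v : V, G.Adj (σ u) (σ v) ↔ G.Adj u v

/-- A proper coloring is distinguishing if the only automorphism mapping every color
class to itself is the identity. -/
def IsDistinguishing {V : Type*} (G : SimpleGraph V) {α : Type*} (C : G.Coloring α) : Prop :=
  ∀ σ : Equiv.Perm V, IsGraphAutomorphism G σ → (∀ v, C (σ v) = C v) → σ = 1

/-- The distinguishing chromatic number: the least number of colors of a proper
distinguishing coloring. -/
noncomputable def distChromNum {V : Type*} (G : SimpleGraph V) : ℕ :=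
  sInf {n : ℕ | ∃ C : G.Coloring (Fin n), IsDistinguishing G C}

/-- The chromatic number (as a natural number). -/
noncomputable def chromNum {V : Type*} (G : SimpleGraph V) : ℕ :=
  sInf {n : ℕ | G.Colorable n}

open MulAction Equiv
open scoped Pointwise

section Counting

variable {G X : Type*} [Group G] [MulAction G X]

theorem MulAction.sum_card_fixedBy_eq_sum_card_stabilizer [Fintype G] [Fintype X] :
    ∑ g : G, Nat.card (fixedBy X g) = ∑ x : X, Nat.card (stabilizer G x) := by
  rw [← Nat.card_sigma, ← Nat.card_sigma]
  exact Nat.card_congr <|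
    (Equiv.subtypeProdEquivSigmaSubtype fun (g : G) (x : X) => g • x = x).symm.trans <|
      ((Equiv.prodComm G X).subtypeEquiv fun _ => Iff.rfl).trans <|
        Equiv.subtypeProdEquivSigmaSubtype fun (x : X) (g : G) => g ∈ stabilizer G x

theorem Subgroup.le_card_of_ne_bot [Finite G] {r : ℕ}
    (hr : ∀ p : ℕ, p.Prime → p ∣ Nat.card G → r ≤ p) {H : Subgroup G} (hH : H ≠ ⊥) :
    r ≤ Nat.card H := by
  obtain ⟨p, hp, hpH⟩ := Nat.exists_prime_and_dvd (mt Subgroup.card_eq_one.1 hH)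
  exact (hr p hp (hpH.trans H.card_subgroup_dvd_card)).trans (Nat.le_of_dvd Nat.card_pos hpH)

theorem MulAction.exists_stabilizer_eq_bot [Fintype G] [Fintype X] {r : ℕ}
    (hr : ∀ p : ℕ, p.Prime → p ∣ Nat.card G → r ≤ p)
    (hsum : ∑ g : G, Nat.card (fixedBy X g) < r * Fintype.card X) :
    ∃ x : X, stabilizer G x = ⊥ := by
  by_contra! h
  refine hsum.not_ge ?_
  calc r * Fintype.card X = ∑ _x : X, r := by simp [mul_comm]
    _ ≤ ∑ x : X, Nat.card (stabilizer G x) :=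
      Finset.sum_le_sum fun x _ => Subgroup.le_card_of_ne_bot hr (h x)
    _ = ∑ g : G, Nat.card (fixedBy X g) := sum_card_fixedBy_eq_sum_card_stabilizer.symm

end Counting

attribute [local instance] arrowAction

theorem MulAction.mem_fixedBy_arrow_iff {G A B : Type*} [Group G] [MulAction G A] (g : G)
    (f : A → B) : f ∈ fixedBy (A → B) g ↔ ∀ a, f (g • a) = f a := by
  rw [← fixedBy_inv, mem_fixedBy, funext_iff]
  change (∀ a, f (g⁻¹⁻¹ • a) = f a) ↔ _
  rw [inv_inv]

theorem Nat.card_le_pow_of_factorsThrough {α ι β : Type*} [Finite ι] [Finite β] {π : α → ι}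
    (hπ : π.Surjective) (S : Set (α → β)) (hS : ∀ f ∈ S, f.FactorsThrough π) :
    Nat.card S ≤ Nat.card β ^ Nat.card ι := by
  rw [← Nat.card_fun]
  refine Nat.card_le_card_of_injective (fun f => f.1 ∘ Function.surjInv hπ) fun f g hfg => ?_
  refine Subtype.ext (funext fun a => ?_)
  have hfg_a : f.1 (Function.surjInv hπ (π a)) = g.1 (Function.surjInv hπ (π a)) :=
    congrFun hfg (π a)
  rwa [hS f f.2 (Function.surjInv_eq hπ (π a)), hS g g.2 (Function.surjInv_eq hπ (π a))] at hfg_a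

/-- The number `θ_σ` of orbits of `⟨σ⟩` on `s`. For a permutation of finite order the forward orbit
`{σ^m v | m : ℕ}` is the whole orbit of `v`. -/
noncomputable def numOrbitsOn {V : Type*} (σ : Perm V) (s : Set V) : ℕ :=
  Nat.card ((fun v => {w : V | ∃ m : ℕ, (σ ^ m) v = w}) '' s)

/-- A coloring of `s` fixed by `g` is constant on each orbit of `g`, so it is determined by one
color per orbit. -/
theorem card_fixedBy_arrow_le {V β : Type*} [Finite β] (s : Set V) [Finite s]
    (g : stabilizer (Perm V) s) :
    Nat.card (fixedBy (s → β) g) ≤ Nat.card β ^ numOrbitsOn g s := by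
  set orbit := fun v => {w : V | ∃ m : ℕ, ((g : Perm V) ^ m) v = w}
  refine Nat.card_le_pow_of_factorsThrough (π := fun x : s => ⟨orbit x, x, x.2, rfl⟩) ?_ _ ?_
  · rintro ⟨_, v, hv, rfl⟩
    exact ⟨⟨v, hv⟩, rfl⟩
  · intro f hf x y hxy
    have hxy : orbit x = orbit y := congrArg Subtype.val hxy
    obtain ⟨m, hm⟩ : (y : V) ∈ orbit x := hxy ▸ ⟨0, rfl⟩
    have hy : y = g ^ m • x := Subtype.ext (by simpa [Perm.smul_def] using hm.symm)
    rw [hy]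
    exact ((mem_fixedBy_arrow_iff _ f).1 (fixedBy_subset_fixedBy_zpow _ g m hf) x).symm

theorem exists_fun_forall_fixed_imp_eq_one {V : Type*} [Fintype V] (s : Set V)
    (K : Subgroup (Perm V)) [Fintype K] (hK : K ≤ stabilizer (Perm V) s) {r t : ℕ}
    (hr : ∀ p : ℕ, p.Prime → p ∣ Nat.card K → r ≤ p)
    (hsum : ∑ g : K, t ^ numOrbitsOn g s < r * t ^ Nat.card s) :
    ∃ f : s → Fin t, ∀ g : stabilizer (Perm V) s, (g : Perm V) ∈ K →
      (∀ x : s, f (g • x) = f x) → g = 1 := by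
  classical
  let _ : MulAction K (s → Fin t) := compHom _ (Subgroup.inclusion hK)
  obtain ⟨f, hf⟩ := exists_stabilizer_eq_bot (X := s → Fin t) hr <| by
    calc ∑ g : K, Nat.card (fixedBy (s → Fin t) g)
        ≤ ∑ g : K, t ^ numOrbitsOn g s := Finset.sum_le_sum fun g _ => by
          have hg := card_fixedBy_arrow_le (β := Fin t) s (Subgroup.inclusion hK g)
          rw [Nat.card_fin] at hg
          exact hg
      _ < r * Fintype.card (s → Fin t) := by simpa [Nat.card_eq_fintype_card] using hsum
  refine ⟨f, fun g hgK hfg => ?_⟩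
  have hgf : (⟨g, hgK⟩ : K) ∈ stabilizer K f := (mem_fixedBy_arrow_iff g f).2 hfg
  rw [hf, Subgroup.mem_bot] at hgf
  exact Subtype.ext (by simpa using congrArg Subtype.val hgf)

def graphAutomorphisms {V : Type*} (G : SimpleGraph V) : Subgroup (Perm V) where
  carrier := {σ | IsGraphAutomorphism G σ}
  one_mem' _ _ := Iff.rfl
  mul_mem' ha hb u v := (ha _ _).trans (hb u v)
  inv_mem' {a} ha u v := by simpa using (ha (a⁻¹ u) (a⁻¹ v)).symm

@[simp]
theorem mem_graphAutomorphisms {V : Type*} {G : SimpleGraph V} {σ : Perm V} :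
    σ ∈ graphAutomorphisms G ↔ IsGraphAutomorphism G σ :=
  Iff.rfl

theorem distChromNum_le_card {V α : Type*} {G : SimpleGraph V} [Fintype α] (C : G.Coloring α)
    (hC : IsDistinguishing G C) : distChromNum G ≤ Fintype.card α :=
  Nat.sInf_le ⟨(SimpleGraph.Embedding.completeGraph (Fintype.equivFin α).toEmbedding).toHom.comp C,
    fun σ hσ hcol => hC σ hσ fun v => (Fintype.equivFin α).injective (hcol v)⟩

namespace SimpleGraph.Coloring

variable {V α β : Type*} {G : SimpleGraph V}

def recolorClass (C : G.Coloring α) (c : α) (s : Set V) [DecidablePred (· ∈ s)]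
    (hs : ∀ v, v ∈ s ↔ C v = c) (f : s → β) : G.Coloring ({a // a ≠ c} ⊕ β) :=
  Coloring.mk
    (fun v => if h : v ∈ s then .inr (f ⟨v, h⟩) else .inl ⟨C v, mt (hs v).2 h⟩)
    fun {u v} huv heq => by
      by_cases hu : u ∈ s <;> by_cases hv : v ∈ s <;> simp only [hu, hv, dite_true, dite_false,
        reduceCtorEq, Sum.inl.injEq, Subtype.mk.injEq] at heq
      · exact C.valid huv (((hs u).1 hu).trans ((hs v).1 hv).symm)
      · exact C.valid huv heq

variable (C : G.Coloring α) (c : α) (s : Set V) [DecidablePred (· ∈ s)]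
  (hs : ∀ v, v ∈ s ↔ C v = c) (f : s → β)

theorem recolorClass_apply (v : V) : C.recolorClass c s hs f v =
    if h : v ∈ s then .inr (f ⟨v, h⟩) else .inl ⟨C v, mt (hs v).2 h⟩ :=
  rfl

theorem recolorClass_of_mem {v : V} (hv : v ∈ s) :
    C.recolorClass c s hs f v = .inr (f ⟨v, hv⟩) := by
  rw [recolorClass_apply, dif_pos hv]

theorem isRight_recolorClass (v : V) : (C.recolorClass c s hs f v).isRight ↔ v ∈ s := by
  by_cases hv : v ∈ s <;> simp [recolorClass_apply, hv]

theorem isDistinguishing_recolorClass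
    (hf : ∀ g : stabilizer (Perm V) s, IsGraphAutomorphism G g → (∀ x : s, f (g • x) = f x) →
      g = 1) :
    IsDistinguishing G (C.recolorClass c s hs f) := by
  intro σ hσ hcol
  have hmem (v : V) : σ v ∈ s ↔ v ∈ s := by
    rw [← isRight_recolorClass C c s hs f, hcol v, isRight_recolorClass]
  refine congrArg Subtype.val (hf ⟨σ, mem_stabilizer_set.2 hmem⟩ hσ fun x => ?_)
  have hσx := hcol x
  rw [recolorClass_of_mem C c s hs f x.2, recolorClass_of_mem C c s hs f ((hmem x).2 x.2)] at hσx
  exact Sum.inr_injective hσx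

end SimpleGraph.Coloring

theorem sum_pow_lt_of_sum_zpow_sub_lt {ι : Type*} (S : Finset ι) (θ : ι → ℕ) {t n r : ℕ}
    (ht : 0 < t) (h : ∑ i ∈ S, (t : ℝ) ^ ((θ i : ℤ) - n) < r) :
    ∑ i ∈ S, t ^ θ i < r * t ^ n := by
  have ht' : (0 : ℝ) < t := by exact_mod_cast ht
  have hzpow (i : ι) : (t : ℝ) ^ ((θ i : ℤ) - n) * (t : ℝ) ^ n = (t : ℝ) ^ θ i := by
    rw [zpow_sub₀ ht'.ne', zpow_natCast, zpow_natCast, div_mul_cancel₀ _ (pow_pos ht' n).ne']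
  have hreal : (∑ i ∈ S, (t : ℝ) ^ θ i) < r * (t : ℝ) ^ n := by
    simpa only [Finset.sum_mul, hzpow] using mul_lt_mul_of_pos_right h (pow_pos ht' n)
  exact_mod_cast hreal

theorem stmt0_general {V : Type*} [Fintype V] (G : SimpleGraph V)
    (C : G.Coloring (Fin (chromNum G))) (c : Fin (chromNum G))
    (C₁ : Finset V) (hC₁ : ∀ v : V, v ∈ C₁ ↔ C v = c)
    (𝒢 : Finset (Equiv.Perm V))
    (h𝒢 : ∀ σ : Equiv.Perm V, σ ∈ 𝒢 ↔
      (IsGraphAutomorphism G σ ∧ ∀ v : V, σ v ∈ C₁ ↔ v ∈ C₁))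
    (r : ℕ)
    (hrleast : ∀ p : ℕ, p.Prime → p ∣ 𝒢.card → r ≤ p)
    (t : ℕ) (ht : 2 ≤ t)
    (hsum : ∑ σ ∈ 𝒢, (t : ℝ) ^
        ((Nat.card ((fun v => {w : V | ∃ m : ℕ, (σ ^ m) v = w}) '' (C₁ : Set V)) : ℤ)
          - (C₁.card : ℤ)) < (r : ℝ)) :
    distChromNum G ≤ chromNum G + t - 1 := by
  classical
  set s : Set V := ↑C₁
  have hs (v : V) : v ∈ s ↔ C v = c := hC₁ v
  set K := graphAutomorphisms G ⊓ stabilizer (Perm V) s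
  have hK (σ : Perm V) : σ ∈ 𝒢 ↔ σ ∈ K := by
    rw [h𝒢, Subgroup.mem_inf, mem_graphAutomorphisms, mem_stabilizer_set]
    simp only [Perm.smul_def, s, Finset.mem_coe]
  have hrK (p : ℕ) (hp : p.Prime) (hpK : p ∣ Nat.card K) : r ≤ p := by
    rw [Nat.card_eq_fintype_card, Fintype.card_of_subtype 𝒢 hK] at hpK
    exact hrleast p hp hpK
  obtain ⟨f, hf⟩ := exists_fun_forall_fixed_imp_eq_one (t := t) s K inf_le_right hrK <| by
    calc ∑ g : K, t ^ numOrbitsOn g s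
        = ∑ σ ∈ 𝒢, t ^ numOrbitsOn σ s :=
          (Finset.sum_subtype 𝒢 hK fun σ => t ^ numOrbitsOn σ s).symm
      _ < r * t ^ C₁.card := sum_pow_lt_of_sum_zpow_sub_lt 𝒢 _ (by omega) hsum
      _ = r * t ^ Nat.card s := by simp [s]
  have hdist := C.isDistinguishing_recolorClass c s hs f fun g hg => hf g ⟨hg, g.2⟩
  calc distChromNum G ≤ Fintype.card ({a // a ≠ c} ⊕ Fin t) := distChromNum_le_card _ hdist
    _ = chromNum G + t - 1 := by
      have := c.pos
      simp only [Fintype.card_sum, Fintype.card_subtype_compl, Fintype.card_fin,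
        Fintype.card_unique]
      omega

/-- Variant of the Motion Lemma: if `C` is a proper coloring of `G` with `χ(G)` colors,
`C₁` is one of its color classes, `𝒢` is the (nontrivial) subgroup of `Aut G` of
automorphisms fixing `C₁` setwise, `r` is the least prime dividing `|𝒢|`, and
`∑_{σ ∈ 𝒢} t^(θ_σ - |C₁|) < r` where `θ_σ` is the number of orbits of `⟨σ⟩` on `C₁`,
then `χ_D(G) ≤ χ(G) + t - 1`. -/
theorem stmt0 {V : Type*} [Fintype V] (G : SimpleGraph V)
    (C : G.Coloring (Fin (chromNum G))) (c : Fin (chromNum G))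
    (C₁ : Finset V) (hC₁ : ∀ v : V, v ∈ C₁ ↔ C v = c)
    (𝒢 : Finset (Equiv.Perm V))
    (h𝒢 : ∀ σ : Equiv.Perm V, σ ∈ 𝒢 ↔
      (IsGraphAutomorphism G σ ∧ ∀ v : V, σ v ∈ C₁ ↔ v ∈ C₁))
    (hnontriv : ∃ σ ∈ 𝒢, σ ≠ 1)
    (r : ℕ) (hrprime : r.Prime) (hrdvd : r ∣ 𝒢.card)
    (hrleast : ∀ p : ℕ, p.Prime → p ∣ 𝒢.card → r ≤ p)
    (t : ℕ) (ht : 2 ≤ t)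
    (hsum : ∑ σ ∈ 𝒢, (t : ℝ) ^
        ((Nat.card ((fun v => {w : V | ∃ m : ℕ, (σ ^ m) v = w}) '' (C₁ : Set V)) : ℤ)
          - (C₁.card : ℤ)) < (r : ℝ)) :
    distChromNum G ≤ chromNum G + t - 1 :=
  stmt0_general G C c C₁ hC₁ 𝒢 h𝒢 r hrleast t ht hsum
end

section
/- Let G be a finite simple graph, let C be a proper coloring of G with χ(G) colors, and let C₁ be one of its color classes. Let 𝒢 be the subgroup of Aut(G) consisting of all automorphisms A with A(C₁) = C₁ (setwise), and assume 𝒢 is nontrivial. Let F(C₁) be the maximum, over non-identity A ∈ 𝒢, of the number of vertices v ∈ C₁ with A(v) = v. If for some integer t ≥ 2 one has F(C₁) < |C₁| − 2·log_t |𝒢|, then χ_D(G) ≤ χ(G) + t − 1. -/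
open Finset Equiv

private noncomputable def cycRep {V : Type*} [Fintype V] [DecidableEq V]
    (σ : Equiv.Perm V) (v : V) : V :=
  (Fintype.equivFin V).symm
    (((Finset.univ.filter (σ.SameCycle v)).image (Fintype.equivFin V)).min'
      ⟨Fintype.equivFin V v,
        Finset.mem_image_of_mem _ (Finset.mem_filter.2 ⟨Finset.mem_univ _, Equiv.Perm.SameCycle.refl _ _⟩)⟩)

private lemma cycRep_sameCycle {V : Type*} [Fintype V] [DecidableEq V]
    (σ : Equiv.Perm V) (v : V) : σ.SameCycle v (cycRep σ v) := by
  have h := Finset.min'_mem ((Finset.univ.filter (σ.SameCycle v)).image (Fintype.equivFin V))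
      ⟨Fintype.equivFin V v,
        Finset.mem_image_of_mem _ (Finset.mem_filter.2 ⟨Finset.mem_univ _, Equiv.Perm.SameCycle.refl _ _⟩)⟩
  rw [Finset.mem_image] at h
  obtain ⟨u, hu, hue⟩ := h
  have : cycRep σ v = u := by
    rw [cycRep, ← hue, Equiv.symm_apply_apply]
  rw [this]
  exact (Finset.mem_filter.1 hu).2

private lemma cycRep_eq_of_sameCycle {V : Type*} [Fintype V] [DecidableEq V]
    (σ : Equiv.Perm V) {v w : V} (h : σ.SameCycle v w) : cycRep σ v = cycRep σ w := by
  have : Finset.univ.filter (σ.SameCycle v) = Finset.univ.filter (σ.SameCycle w) := by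
    ext x
    simp only [Finset.mem_filter, Finset.mem_univ, true_and]
    exact ⟨fun hx => h.symm.trans hx, fun hx => h.trans hx⟩
  have key : ∀ (s t : Finset (Fin (Fintype.card V))) (hs : s.Nonempty) (ht : t.Nonempty),
      s = t → s.min' hs = t.min' ht := by
    rintro s t hs ht rfl; rfl
  rw [cycRep, cycRep]
  exact congrArg _ (key _ _ _ _ (congrArg _ this))

section
variable {V : Type*} [Fintype V] [DecidableEq V]

private lemma exists_good_fun (C₁ : Finset V) (𝒢 : Finset (Equiv.Perm V))
    (hinv : ∀ σ ∈ 𝒢, ∀ v : V, σ v ∈ C₁ ↔ v ∈ C₁)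
    (F t : ℕ) (ht : 2 ≤ t)
    (hFub : ∀ σ ∈ 𝒢, σ ≠ 1 → (C₁.filter (fun v => σ v = v)).card ≤ F)
    (hFm : F < C₁.card)
    (hcard : 𝒢.card < t ^ (C₁.card - (C₁.card + F) / 2)) :
    ∃ f : V → Fin t, ∀ σ ∈ 𝒢, σ ≠ 1 → ∃ v ∈ C₁, f (σ v) ≠ f v := by
  classical
  set n := Fintype.card V with hn
  set m := C₁.card with hm
  set r := (m + F) / 2 with hr
  have hmn : m ≤ n := by simpa [hn, hm] using Finset.card_le_card (Finset.subset_univ C₁)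
  have hrm : r < m := by omega
  -- powers stay in C₁
  have hpow : ∀ σ ∈ 𝒢, ∀ v ∈ C₁, ∀ i : ℕ, (σ ^ i) v ∈ C₁ := by
    intro σ hσ v hv i
    induction i with
    | zero => simpa using hv
    | succ k ih => rw [pow_succ', Equiv.Perm.mul_apply]; exact (hinv σ hσ _).2 ih
  have hcycC₁ : ∀ σ ∈ 𝒢, ∀ v ∈ C₁, ∀ w, σ.SameCycle v w → w ∈ C₁ := by
    intro σ hσ v hv w hsc
    obtain ⟨i, -, -, hi⟩ := hsc.exists_pow_eq σ
    exact hi ▸ hpow σ hσ v hv i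
  -- constancy of "bad" functions along cycles
  have hconst : ∀ σ ∈ 𝒢, ∀ f : V → Fin t, (∀ v ∈ C₁, f (σ v) = f v) →
      ∀ v ∈ C₁, ∀ w, σ.SameCycle v w → f w = f v := by
    intro σ hσ f hf v hv w hsc
    obtain ⟨i, -, -, hi⟩ := hsc.exists_pow_eq σ
    subst hi
    clear hsc
    induction i with
    | zero => simp
    | succ k ih =>
      rw [pow_succ', Equiv.Perm.mul_apply, hf _ (hpow σ hσ v hv k), ih]
  -- the bad sets
  set Bad : Equiv.Perm V → Finset (V → Fin t) :=
    fun σ => Finset.univ.filter (fun f => ∀ v ∈ C₁, f (σ v) = f v) with hBad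
  set R : Equiv.Perm V → Finset V := fun σ => C₁.image (cycRep σ) with hR
  have hRC₁ : ∀ σ ∈ 𝒢, R σ ⊆ C₁ := by
    intro σ hσ x hx
    rw [hR] at hx
    obtain ⟨v, hv, rfl⟩ := Finset.mem_image.1 hx
    exact hcycC₁ σ hσ v hv _ (cycRep_sameCycle σ v)
  have hRfix : ∀ σ, ∀ x ∈ R σ, cycRep σ x = x := by
    intro σ x hx
    obtain ⟨v, hv, rfl⟩ := Finset.mem_image.1 hx
    exact (cycRep_eq_of_sameCycle σ (cycRep_sameCycle σ v)).symm
  -- cardinality of R σ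
  have hRcard : ∀ σ ∈ 𝒢, σ ≠ 1 → 2 * (R σ).card ≤ m + F := by
    intro σ hσ hσ1
    set Fix := C₁.filter (fun v => σ v = v) with hFix
    have hFixF : Fix.card ≤ F := hFub σ hσ hσ1
    have hsplit : (R σ).card = ((R σ).filter (fun x => σ x = x)).card
        + ((R σ).filter (fun x => ¬ σ x = x)).card :=
      (Finset.card_filter_add_card_filter_not _).symm
    have h1 : ((R σ).filter (fun x => σ x = x)).card ≤ Fix.card := by
      apply Finset.card_le_card
      intro x hx
      rw [Finset.mem_filter] at hx
      exact Finset.mem_filter.2 ⟨hRC₁ σ hσ hx.1, hx.2⟩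
    -- moved reps: pairs {x, σ x}
    set Rm := (R σ).filter (fun x => ¬ σ x = x) with hRm
    have hpairs : 2 * Rm.card ≤ (C₁ \ Fix).card := by
      have hdisj : ∀ x ∈ Rm, ∀ y ∈ Rm, x ≠ y →
          Disjoint ({x, σ x} : Finset V) {y, σ y} := by
        intro x hx y hy hxy
        rw [Finset.disjoint_left]
        intro a ha ha'
        have hax : σ.SameCycle x a := by
          rcases Finset.mem_insert.1 ha with h | h
          · exact h ▸ Equiv.Perm.SameCycle.refl _ _
          · rw [Finset.mem_singleton] at h; exact h ▸ ⟨1, by simp⟩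
        have hay : σ.SameCycle y a := by
          rcases Finset.mem_insert.1 ha' with h | h
          · exact h ▸ Equiv.Perm.SameCycle.refl _ _
          · rw [Finset.mem_singleton] at h; exact h ▸ ⟨1, by simp⟩
        have : cycRep σ x = cycRep σ y :=
          (cycRep_eq_of_sameCycle σ hax).trans (cycRep_eq_of_sameCycle σ hay).symm
        rw [hRfix σ x (Finset.mem_filter.1 hx).1, hRfix σ y (Finset.mem_filter.1 hy).1] at this
        exact hxy this
      have hsub : Rm.biUnion (fun x => ({x, σ x} : Finset V)) ⊆ C₁ \ Fix := by
        intro a ha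
        obtain ⟨x, hx, hax⟩ := Finset.mem_biUnion.1 ha
        have hxR := (Finset.mem_filter.1 hx).1
        have hxmov := (Finset.mem_filter.1 hx).2
        have hxC : x ∈ C₁ := hRC₁ σ hσ hxR
        rcases Finset.mem_insert.1 hax with h | h
        · subst h
          exact Finset.mem_sdiff.2 ⟨hxC, fun hc => hxmov (Finset.mem_filter.1 hc).2⟩
        · rw [Finset.mem_singleton] at h
          subst h
          refine Finset.mem_sdiff.2 ⟨(hinv σ hσ x).2 hxC, fun hc => ?_⟩
          have := (Finset.mem_filter.1 hc).2
          exact hxmov (σ.injective this)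
      calc 2 * Rm.card = ∑ x ∈ Rm, ({x, σ x} : Finset V).card := by
            rw [Finset.sum_congr rfl (fun x hx => ?_), Finset.sum_const, smul_eq_mul, mul_comm]
            rw [Finset.card_insert_of_notMem (by simpa using Ne.symm (Finset.mem_filter.1 hx).2),
              Finset.card_singleton]
        _ = (Rm.biUnion (fun x => ({x, σ x} : Finset V))).card := (Finset.card_biUnion hdisj).symm
        _ ≤ (C₁ \ Fix).card := Finset.card_le_card hsub
    have hFsub : Fix ⊆ C₁ := Finset.filter_subset _ _
    have := Finset.card_sdiff_of_subset hFsub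
    omega
  -- cardinality of Bad σ
  have hBadcard : ∀ σ ∈ 𝒢, σ ≠ 1 → (Bad σ).card ≤ t ^ ((n - m) + r) := by
    intro σ hσ hσ1
    set D := (Finset.univ \ C₁) ∪ R σ with hD
    have hDcard : D.card ≤ (n - m) + r := by
      have hdisj : Disjoint (Finset.univ \ C₁) (R σ) := by
        rw [Finset.disjoint_left]
        intro a ha ha'
        exact (Finset.mem_sdiff.1 ha).2 (hRC₁ σ hσ ha')
      rw [hD, Finset.card_union_of_disjoint hdisj]
      have h1 : (Finset.univ \ C₁).card = n - m := by
        rw [Finset.card_sdiff_of_subset (Finset.subset_univ _), Finset.card_univ]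
      have h2 : (R σ).card ≤ r := by
        have := hRcard σ hσ hσ1
        omega
      omega
    -- injection from Bad σ into functions on D
    have hinj : (Bad σ).card ≤ Fintype.card (↥D → Fin t) := by
      apply Finset.card_le_card_of_injOn (fun f => (fun x : ↥D => f x.1))
      · intro f _; exact Finset.mem_univ _
      · intro f hf g hg hfg
        simp only [hBad, Finset.mem_coe, Finset.mem_filter] at hf hg
        funext v
        by_cases hv : v ∈ C₁
        · have hrep : cycRep σ v ∈ D := by
            rw [hD]
            exact Finset.mem_union_right _ (Finset.mem_image_of_mem _ hv)
          have h1 : f v = f (cycRep σ v) :=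
            (hconst σ hσ f hf.2 v hv _ (cycRep_sameCycle σ v)).symm
          have h2 : g v = g (cycRep σ v) :=
            (hconst σ hσ g hg.2 v hv _ (cycRep_sameCycle σ v)).symm
          have := congrFun hfg ⟨cycRep σ v, hrep⟩
          simpa [h1, h2] using this
        · have hvD : v ∈ D := Finset.mem_union_left _ (Finset.mem_sdiff.2 ⟨Finset.mem_univ _, hv⟩)
          exact congrFun hfg ⟨v, hvD⟩
    calc (Bad σ).card ≤ Fintype.card (↥D → Fin t) := hinj
      _ = t ^ D.card := by rw [Fintype.card_fun, Fintype.card_fin, Fintype.card_coe]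
      _ ≤ t ^ ((n - m) + r) := Nat.pow_le_pow_right (by omega) hDcard
  -- union bound
  set BadAll := Finset.univ.filter
    (fun f : V → Fin t => ∃ σ ∈ 𝒢, σ ≠ 1 ∧ ∀ v ∈ C₁, f (σ v) = f v) with hBA
  have hsub : BadAll ⊆ (𝒢.erase 1).biUnion Bad := by
    intro f hf
    rw [hBA, Finset.mem_filter] at hf
    obtain ⟨-, σ, hσ, hσ1, hfσ⟩ := hf
    exact Finset.mem_biUnion.2 ⟨σ, Finset.mem_erase.2 ⟨hσ1, hσ⟩,
      Finset.mem_filter.2 ⟨Finset.mem_univ _, hfσ⟩⟩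
  have hBAcard : BadAll.card < t ^ n := by
    have h1 : BadAll.card ≤ ∑ σ ∈ 𝒢.erase 1, (Bad σ).card :=
      le_trans (Finset.card_le_card hsub) Finset.card_biUnion_le
    have h2 : ∑ σ ∈ 𝒢.erase 1, (Bad σ).card ≤ (𝒢.erase 1).card * t ^ ((n - m) + r) := by
      rw [← smul_eq_mul, ← Finset.sum_const]
      apply Finset.sum_le_sum
      intro σ hσ
      rw [Finset.mem_erase] at hσ
      exact hBadcard σ hσ.2 hσ.1
    have e1 : (𝒢.erase 1).card ≤ t ^ (m - r) - 1 :=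
      le_trans (Finset.card_le_card (Finset.erase_subset _ _)) (by omega)
    have e2 : (𝒢.erase 1).card * t ^ ((n - m) + r) < t ^ n := by
      calc (𝒢.erase 1).card * t ^ ((n - m) + r)
          ≤ (t ^ (m - r) - 1) * t ^ ((n - m) + r) := Nat.mul_le_mul_right _ e1
        _ = t ^ n - t ^ ((n - m) + r) := by
            rw [Nat.sub_mul, one_mul, ← pow_add]
            congr 2
            omega
        _ < t ^ n := Nat.sub_lt (pow_pos (by omega) _) (pow_pos (by omega) _)
    omega
  obtain ⟨f, hf⟩ : ∃ f : V → Fin t, f ∉ BadAll := by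
    by_contra h
    push_neg at h
    have heq : BadAll = Finset.univ := Finset.eq_univ_iff_forall.2 h
    rw [heq, Finset.card_univ, Fintype.card_fun, Fintype.card_fin] at hBAcard
    exact lt_irrefl _ hBAcard
  refine ⟨f, ?_⟩
  rw [hBA, Finset.mem_filter] at hf
  push_neg at hf
  intro σ hσ hσ1
  obtain ⟨v, hv, hvne⟩ := hf (Finset.mem_univ f) σ hσ hσ1
  exact ⟨v, hv, hvne⟩
end

/-- If `C` is a proper coloring of `G` with `χ(G)` colors, `C₁` one of its color classes,
`𝒢` the (nontrivial) subgroup of `Aut G` of automorphisms fixing `C₁` setwise, and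
`F(C₁)` — the maximum over non-identity `σ ∈ 𝒢` of the number of vertices of `C₁` fixed
by `σ` — satisfies `F(C₁) < |C₁| - 2 log_t |𝒢|` for some integer `t ≥ 2`, then
`χ_D(G) ≤ χ(G) + t - 1`. -/
theorem stmt1 {V : Type*} [Fintype V] [DecidableEq V] (G : SimpleGraph V)
    (C : G.Coloring (Fin (chromNum G))) (c : Fin (chromNum G))
    (C₁ : Finset V) (hC₁ : ∀ v : V, v ∈ C₁ ↔ C v = c)
    (𝒢 : Finset (Equiv.Perm V))
    (h𝒢 : ∀ σ : Equiv.Perm V, σ ∈ 𝒢 ↔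
      (IsGraphAutomorphism G σ ∧ ∀ v : V, σ v ∈ C₁ ↔ v ∈ C₁))
    (hnontriv : ∃ σ ∈ 𝒢, σ ≠ 1)
    (F : ℕ)
    (hFub : ∀ σ ∈ 𝒢, σ ≠ 1 → (C₁.filter (fun v => σ v = v)).card ≤ F)
    (hFmax : ∃ σ ∈ 𝒢, σ ≠ 1 ∧ (C₁.filter (fun v => σ v = v)).card = F)
    (t : ℕ) (ht : 2 ≤ t)
    (hF : (F : ℝ) < (C₁.card : ℝ) - 2 * Real.logb t (𝒢.card : ℝ)) :
    distChromNum G ≤ chromNum G + t - 1 := by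
  classical
  set m := C₁.card with hm
  have h1G : (1 : Equiv.Perm V) ∈ 𝒢 :=
    (h𝒢 1).2 ⟨fun u v => by simp [IsGraphAutomorphism], fun v => by simp⟩
  obtain ⟨σ₀, hσ₀, hσ₀1⟩ := hnontriv
  have h2G : 2 ≤ 𝒢.card := by
    have : ({1, σ₀} : Finset (Equiv.Perm V)) ⊆ 𝒢 := by
      intro x hx
      rcases Finset.mem_insert.1 hx with h | h
      · exact h ▸ h1G
      · rw [Finset.mem_singleton] at h; exact h ▸ hσ₀
    calc 2 = ({1, σ₀} : Finset (Equiv.Perm V)).card := by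
            rw [Finset.card_insert_of_notMem (by simpa using (Ne.symm hσ₀1)),
              Finset.card_singleton]
      _ ≤ 𝒢.card := Finset.card_le_card this
  have ht1 : (1 : ℝ) < (t : ℝ) := by exact_mod_cast by omega
  have hGpos : (0 : ℝ) < (𝒢.card : ℝ) := by exact_mod_cast by omega
  have hlogb_nonneg : 0 ≤ Real.logb t (𝒢.card : ℝ) :=
    Real.logb_nonneg ht1 (by exact_mod_cast by omega)
  have hFm : F < m := by
    have : (F : ℝ) < (m : ℝ) := by
      calc (F : ℝ) < (m : ℝ) - 2 * Real.logb t (𝒢.card : ℝ) := hF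
        _ ≤ (m : ℝ) := by linarith
    exact_mod_cast this
  -- the cardinality bound
  set k := m - (m + F) / 2 with hk
  have hcard : 𝒢.card < t ^ k := by
    have hlog : Real.logb t (𝒢.card : ℝ) < ((m : ℝ) - F) / 2 := by linarith
    have hk2 : ((m : ℝ) - F) / 2 ≤ (k : ℝ) := by
      have h1 : ((m + F) / 2 : ℕ) ≤ ((m + F : ℕ) : ℝ) / 2 := Nat.cast_div_le
      have h2 : (k : ℝ) = (m : ℝ) - ((m + F) / 2 : ℕ) := by
        have : (m + F) / 2 ≤ m := by omega
        rw [hk, Nat.cast_sub this]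
      push_cast at h1 ⊢
      rw [h2]
      linarith
    have : (𝒢.card : ℝ) < (t : ℝ) ^ (k : ℕ) := by
      calc (𝒢.card : ℝ) = (t : ℝ) ^ Real.logb t (𝒢.card : ℝ) :=
            (Real.rpow_logb (by linarith) (by linarith) hGpos).symm
        _ < (t : ℝ) ^ (((m : ℝ) - F) / 2) :=
            (Real.rpow_lt_rpow_left_iff ht1).2 hlog
        _ ≤ (t : ℝ) ^ ((k : ℕ) : ℝ) :=
            (Real.rpow_le_rpow_left_iff ht1).2 hk2
        _ = (t : ℝ) ^ (k : ℕ) := Real.rpow_natCast _ _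
    exact_mod_cast this
  obtain ⟨f, hf⟩ := exists_good_fun C₁ 𝒢 (fun σ hσ => ((h𝒢 σ).1 hσ).2) F t ht hFub hFm hcard
  -- build the new coloring
  have hχpos : 0 < chromNum G := c.pos
  set g : V → Fin (chromNum G + t - 1) := fun v =>
    if v ∈ C₁ then
      (if (f v : ℕ) = 0 then ⟨(c : ℕ), by have := c.is_lt; omega⟩
       else ⟨chromNum G + (f v : ℕ) - 1, by have := (f v).is_lt; omega⟩)
    else ⟨(C v : ℕ), by have := (C v).is_lt; omega⟩ with hg
  have hval_out : ∀ v ∉ C₁, (g v : ℕ) = (C v : ℕ) := by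
    intro v hv; simp [hg, hv]
  have hval_in0 : ∀ v ∈ C₁, (f v : ℕ) = 0 → (g v : ℕ) = (c : ℕ) := by
    intro v hv hfv; simp [hg, hv, hfv]
  have hval_in1 : ∀ v ∈ C₁, (f v : ℕ) ≠ 0 → (g v : ℕ) = chromNum G + (f v : ℕ) - 1 := by
    intro v hv hfv; simp [hg, hv, hfv]
  have hCne : ∀ v ∉ C₁, (C v : ℕ) ≠ (c : ℕ) := by
    intro v hv hc
    exact hv ((hC₁ v).2 (Fin.ext hc))
  have hvalid : ∀ {u v : V}, G.Adj u v → g u ≠ g v := by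
    intro u v hadj heq
    have heqv : (g u : ℕ) = (g v : ℕ) := congrArg Fin.val heq
    by_cases hu : u ∈ C₁ <;> by_cases hv : v ∈ C₁
    · exact C.valid hadj (((hC₁ u).1 hu).trans ((hC₁ v).1 hv).symm)
    · have h1 := hval_out v hv
      have h2 := hCne v hv
      have h3 := (C v).is_lt
      by_cases hfu : (f u : ℕ) = 0
      · have := hval_in0 u hu hfu; omega
      · have := hval_in1 u hu hfu; have := (f u).is_lt; omega
    · have h1 := hval_out u hu
      have h2 := hCne u hu
      have h3 := (C u).is_lt
      by_cases hfv : (f v : ℕ) = 0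
      · have := hval_in0 v hv hfv; omega
      · have := hval_in1 v hv hfv; have := (f v).is_lt; omega
    · have h1 := hval_out u hu
      have h2 := hval_out v hv
      exact C.valid hadj (Fin.ext (by omega))
  have hmem : ∀ v : V, v ∈ C₁ ↔ ((g v : ℕ) = (c : ℕ) ∨ chromNum G ≤ (g v : ℕ)) := by
    intro v
    constructor
    · intro hv
      by_cases hfv : (f v : ℕ) = 0
      · exact Or.inl (hval_in0 v hv hfv)
      · right
        have := hval_in1 v hv hfv
        omega
    · intro h
      by_contra hv
      have h1 := hval_out v hv
      have h2 := hCne v hv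
      have h3 := (C v).is_lt
      omega
  -- distinguishing
  have hdist : IsDistinguishing G (SimpleGraph.Coloring.mk g fun {u v} => hvalid) := by
    intro σ hauto hfixes
    have hσinv : ∀ v : V, σ v ∈ C₁ ↔ v ∈ C₁ := by
      intro v
      rw [hmem, hmem v]
      have : g (σ v) = g v := hfixes v
      rw [this]
    have hσG : σ ∈ 𝒢 := (h𝒢 σ).2 ⟨hauto, hσinv⟩
    by_contra hσ1
    obtain ⟨v, hv, hne⟩ := hf σ hσG hσ1
    have hσv : σ v ∈ C₁ := (hσinv v).2 hv
    have heqv : (g (σ v) : ℕ) = (g v : ℕ) := congrArg Fin.val (hfixes v)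
    have hc_lt := c.is_lt
    apply hne
    by_cases hfv : (f v : ℕ) = 0
    · have h1 := hval_in0 v hv hfv
      by_cases hfσ : (f (σ v) : ℕ) = 0
      · exact Fin.ext (by omega)
      · have := hval_in1 _ hσv hfσ; have := (f (σ v)).is_lt; omega
    · have h1 := hval_in1 v hv hfv
      by_cases hfσ : (f (σ v) : ℕ) = 0
      · have := hval_in0 _ hσv hfσ; have := (f v).is_lt; omega
      · have h2 := hval_in1 _ hσv hfσ
        have := (f v).is_lt
        have := (f (σ v)).is_lt
        exact Fin.ext (by omega)
  exact Nat.sInf_le ⟨SimpleGraph.Coloring.mk g fun {u v} => hvalid, hdist⟩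
end

section
/- For every prime power q ≥ 5, the Levi graph LG_q admits a proper distinguishing 3-coloring in which all line-vertices receive one single color and the point-vertices are partitioned into the other two color classes. -/
/-- The Levi graph over a field `F`: the bipartite incidence graph of the
1-dimensional subspaces (points) and 2-dimensional subspaces (lines) of `F³`,
where a point is adjacent to a line iff the point is contained in the line. -/
def LeviGraph (F : Type*) [Field F] :
    SimpleGraph {W : Submodule F (Fin 3 → F) //
      Module.finrank F W = 1 ∨ Module.finrank F W = 2} where
  Adj a b :=
    (Module.finrank F a.1 = 1 ∧ Module.finrank F b.1 = 2 ∧ a.1 ≤ b.1) ∨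
    (Module.finrank F a.1 = 2 ∧ Module.finrank F b.1 = 1 ∧ b.1 ≤ a.1)
  symm := by
    refine ⟨?_⟩
    rintro a b (⟨h1, h2, h3⟩ | ⟨h1, h2, h3⟩)
    · exact Or.inr ⟨h2, h1, h3⟩
    · exact Or.inl ⟨h2, h1, h3⟩
  loopless := by
    refine ⟨?_⟩
    rintro a (⟨h1, h2, _⟩ | ⟨h1, h2, _⟩) <;> omega

/-!
Colour every line `2`, nine marked points `0` and all other points `1`, the marked points being
built from a generator `α` of `Fˣ`; since `q ≥ 5`, `α² ≠ 1` and `α³ ≠ 1`. An automorphism of the Levi graph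
preserving the colours preserves points and lines, so it is a collineation of the projective
plane preserving `marked α`. The `x`-axis is the only line through four marked points. The line at
infinity and the `y`-axis are then the only other lines through three marked points that meet an
already fixed line in an unmarked point. With the axes fixed, the slopes of the lines joining the
marked points of the two axes pin down every marked point. Finally, a collineation fixing
`(0, 0), (1, 0), (0, 1), (α, 0)` and three points at infinity fixes every `(αⁿ, 0)` by the
classical construction of products, and then every point and every line.
-/

open Projectivization Matrix Module Function
open scoped LinearAlgebra.Projectivization

lemma FiniteField.exists_generator_of_five_le_card {K : Type*} [Field K] [Fintype K]
    (hK : 5 ≤ Fintype.card K) :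
    ∃ α : K, α ≠ 0 ∧ α ^ 2 ≠ 1 ∧ α ^ 3 ≠ 1 ∧ ∀ x ≠ 0, ∃ n : ℕ, α ^ n = x := by
  classical
  obtain ⟨g, hg⟩ := IsCyclic.exists_generator (α := Kˣ)
  have hord : 4 ≤ orderOf g := by
    rw [orderOf_eq_card_of_forall_mem_zpowers hg, Nat.card_eq_fintype_card, Fintype.card_units]
    omega
  have hpow : ∀ n, n ≠ 0 → n < 4 → (g : K) ^ n ≠ 1 := fun n hn hn4 h =>
    pow_ne_one_of_lt_orderOf (x := g) hn (by omega) (Units.ext (by simpa using h))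
  refine ⟨g, g.ne_zero, hpow 2 two_ne_zero (by norm_num), hpow 3 three_ne_zero (by norm_num),
    fun x hx => ?_⟩
  obtain ⟨n, hn⟩ := mem_powers_iff_mem_zpowers.2 (hg (Units.mk0 x hx))
  exact ⟨n, by simpa using congrArg Units.val hn⟩

namespace LeviDistinguishing

variable {F : Type*} [Field F]

/-! Points and lines of the projective plane are both elements of `ℙ F (Fin 3 → F)`: the line
`(a : b : c)` is `a X + b Y + c Z = 0`, and `p ∈ l` is the incidence (orthogonality) of
`Configuration.ofField`. In affine coordinates `pt x y = (x : y : 1)`, `infPt m = (1 : m : 0)` is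
the point at infinity of the lines of slope `m`, `affLine m k` is `y = m x + k` and `vertLine k`
is `x = k`. -/

def pt (x y : F) : ℙ F (Fin 3 → F) := mk F ![x, y, 1] (by simp)

def infPt (m : F) : ℙ F (Fin 3 → F) := mk F ![1, m, 0] (by simp)

def vertInf : ℙ F (Fin 3 → F) := mk F ![0, 1, 0] (by simp)

def affLine (m k : F) : ℙ F (Fin 3 → F) := mk F ![m, -1, k] (by simp)

def vertLine (k : F) : ℙ F (Fin 3 → F) := mk F ![1, 0, -k] (by simp)

def lineInf : ℙ F (Fin 3 → F) := mk F ![0, 0, 1] (by simp)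

abbrev xAxis : ℙ F (Fin 3 → F) := affLine 0 0

abbrev yAxis : ℙ F (Fin 3 → F) := vertLine 0

section Incidence

variable {x y m m' k k' : F}

lemma mk_mem_mk_iff {v w : Fin 3 → F} (hv : v ≠ 0) (hw : w ≠ 0) :
    mk F v hv ∈ mk F w hw ↔ v ⬝ᵥ w = 0 :=
  Iff.rfl

@[simp] lemma pt_mem_affLine : pt x y ∈ affLine m k ↔ y = m * x + k := by
  simp only [affLine, pt, mk_mem_mk_iff, dotProduct, Fin.sum_univ_three, Fin.isValue,
    cons_val_zero, cons_val_one, mul_neg, mul_one, cons_val, one_mul]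
  constructor <;> intro h <;> linear_combination -h

@[simp] lemma pt_mem_vertLine : pt x y ∈ vertLine k ↔ x = k := by
  simp [pt, vertLine, mk_mem_mk_iff, dotProduct, Fin.sum_univ_three, ← sub_eq_add_neg, sub_eq_zero]

@[simp] lemma not_pt_mem_lineInf : pt x y ∉ lineInf := by
  simp [pt, lineInf, mk_mem_mk_iff, dotProduct, Fin.sum_univ_three]

@[simp] lemma infPt_mem_affLine : infPt m' ∈ affLine m k ↔ m' = m := by
  simp [infPt, affLine, mk_mem_mk_iff, dotProduct, Fin.sum_univ_three, ← sub_eq_add_neg,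
    sub_eq_zero, eq_comm]

@[simp] lemma not_infPt_mem_vertLine : infPt m ∉ vertLine k := by
  simp [infPt, vertLine, mk_mem_mk_iff, dotProduct, Fin.sum_univ_three]

@[simp] lemma infPt_mem_lineInf : infPt m ∈ lineInf := by
  simp [infPt, lineInf, mk_mem_mk_iff, dotProduct, Fin.sum_univ_three]

@[simp] lemma not_vertInf_mem_affLine : vertInf ∉ affLine m k := by
  simp [vertInf, affLine, mk_mem_mk_iff, dotProduct, Fin.sum_univ_three]

@[simp] lemma vertInf_mem_vertLine : vertInf ∈ vertLine k := by
  simp [vertInf, vertLine, mk_mem_mk_iff, dotProduct, Fin.sum_univ_three]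

@[simp] lemma vertInf_mem_lineInf : vertInf ∈ (lineInf : ℙ F (Fin 3 → F)) := by
  simp [vertInf, lineInf, mk_mem_mk_iff, dotProduct, Fin.sum_univ_three]

@[simp] lemma pt_inj {x' y' : F} : pt x y = pt x' y' ↔ x = x' ∧ y = y' := by
  refine ⟨fun h => ⟨?_, ?_⟩, fun ⟨hx, hy⟩ => hx ▸ hy ▸ rfl⟩
  · simpa [eq_comm] using (show pt x' y' ∈ vertLine x from h ▸ pt_mem_vertLine.2 rfl)
  · simpa [eq_comm] using (show pt x' y' ∈ affLine 0 y from h ▸ pt_mem_affLine.2 (by ring))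

@[simp] lemma infPt_inj : infPt m = infPt m' ↔ m = m' := by
  refine ⟨fun h => ?_, fun h => h ▸ rfl⟩
  simpa [eq_comm] using (show infPt m' ∈ affLine m 0 from h ▸ infPt_mem_affLine.2 rfl)

@[simp] lemma pt_ne_infPt : pt x y ≠ infPt m :=
  fun h => not_pt_mem_lineInf (h ▸ infPt_mem_lineInf)

@[simp] lemma pt_ne_vertInf : pt x y ≠ vertInf :=
  fun h => not_pt_mem_lineInf (h ▸ vertInf_mem_lineInf)

@[simp] lemma infPt_ne_vertInf : infPt m ≠ vertInf :=
  fun h => not_infPt_mem_vertLine (k := 0) (h ▸ vertInf_mem_vertLine)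

@[simp] lemma infPt_ne_pt : infPt m ≠ pt x y := pt_ne_infPt.symm

@[simp] lemma vertInf_ne_pt : vertInf ≠ pt x y := pt_ne_vertInf.symm

@[simp] lemma vertInf_ne_infPt : vertInf ≠ infPt m := infPt_ne_vertInf.symm

@[simp] lemma affLine_inj : affLine m k = affLine m' k' ↔ m = m' ∧ k = k' := by
  refine ⟨fun h => ⟨?_, ?_⟩, fun ⟨hm, hk⟩ => hm ▸ hk ▸ rfl⟩
  · simpa using (show infPt m ∈ affLine m' k' from h ▸ infPt_mem_affLine.2 rfl)
  · simpa using (show pt 0 k ∈ affLine m' k' from h ▸ pt_mem_affLine.2 (by ring))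

@[simp] lemma affLine_ne_vertLine : affLine m k ≠ vertLine k' :=
  fun h => not_vertInf_mem_affLine (h ▸ vertInf_mem_vertLine)

@[simp] lemma affLine_ne_lineInf : affLine m k ≠ lineInf :=
  fun h => not_vertInf_mem_affLine (h ▸ vertInf_mem_lineInf)

@[simp] lemma vertLine_ne_lineInf : vertLine k ≠ lineInf :=
  fun h => not_pt_mem_lineInf (y := 0) (h ▸ pt_mem_vertLine.2 rfl)

@[simp] lemma vertLine_ne_affLine : vertLine k' ≠ affLine m k := affLine_ne_vertLine.symm

@[simp] lemma lineInf_ne_affLine : lineInf ≠ affLine m k := affLine_ne_lineInf.symm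

end Incidence

lemma exists_eq_pt_or_infPt_or_vertInf (p : ℙ F (Fin 3 → F)) :
    (∃ x y, p = pt x y) ∨ (∃ m, p = infPt m) ∨ p = vertInf := by
  induction p using Projectivization.ind with | h v hv => ?_
  by_cases h2 : v 2 = 0
  · by_cases h0 : v 0 = 0
    · have h1 : v 1 ≠ 0 := fun h1 => hv (by ext i; fin_cases i <;> simp [h0, h1, h2])
      refine .inr (.inr ((mk_eq_mk_iff' F _ _ hv _).2 ⟨v 1, ?_⟩))
      ext i; fin_cases i <;> simp [h0, h2]
    · refine .inr (.inl ⟨v 1 / v 0, (mk_eq_mk_iff' F _ _ hv _).2 ⟨v 0, ?_⟩⟩)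
      ext i; fin_cases i <;> simp [h2, mul_div_cancel₀ _ h0]
  · refine .inl ⟨v 0 / v 2, v 1 / v 2, (mk_eq_mk_iff' F _ _ hv _).2 ⟨v 2, ?_⟩⟩
    ext i; fin_cases i <;> simp [mul_div_cancel₀ _ h2]

lemma exists_eq_affLine_or_vertLine_or_lineInf (l : ℙ F (Fin 3 → F)) :
    (∃ m k, l = affLine m k) ∨ (∃ k, l = vertLine k) ∨ l = lineInf := by
  induction l using Projectivization.ind with | h v hv => ?_
  by_cases h1 : v 1 = 0
  · by_cases h0 : v 0 = 0
    · have h2 : v 2 ≠ 0 := fun h2 => hv (by ext i; fin_cases i <;> simp [h0, h1, h2])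
      refine .inr (.inr ((mk_eq_mk_iff' F _ _ hv _).2 ⟨v 2, ?_⟩))
      ext i; fin_cases i <;> simp [h0, h1]
    · refine .inr (.inl ⟨-(v 2 / v 0), (mk_eq_mk_iff' F _ _ hv _).2 ⟨v 0, ?_⟩⟩)
      ext i; fin_cases i <;> simp [h1, mul_div_cancel₀ _ h0]
  · refine .inl ⟨-(v 0 / v 1), -(v 2 / v 1), (mk_eq_mk_iff' F _ _ hv _).2 ⟨-v 1, ?_⟩⟩
    ext i; fin_cases i <;> simp [mul_div_cancel₀ _ h1]

lemma point_eq_of_mem_of_mem {p q l m : ℙ F (Fin 3 → F)} (hlm : l ≠ m) (hpl : p ∈ l)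
    (hpm : p ∈ m) (hql : q ∈ l) (hqm : q ∈ m) : p = q :=
  (Configuration.ofField.eq_or_eq_of_orthogonal hpl hql hpm hqm).resolve_right hlm

lemma line_eq_of_mem_of_mem {p q l m : ℙ F (Fin 3 → F)} (hpq : p ≠ q) (hpl : p ∈ l)
    (hql : q ∈ l) (hpm : p ∈ m) (hqm : q ∈ m) : l = m :=
  (Configuration.ofField.eq_or_eq_of_orthogonal hpl hql hpm hqm).resolve_left hpq

lemma exists_line_eq_of_card_lt {ι κ : Type*} [Fintype ι] [Fintype κ]
    (hcard : Fintype.card κ < Fintype.card ι) {p : ι → ℙ F (Fin 3 → F)} (hp : Injective p)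
    {a : κ → ℙ F (Fin 3 → F)} (hpa : ∀ i, ∃ j, p i ∈ a j) {l : ℙ F (Fin 3 → F)}
    (hpl : ∀ i, p i ∈ l) : ∃ j, l = a j := by
  choose j hj using hpa
  obtain ⟨i, i', hne, heq⟩ := Fintype.exists_ne_map_eq_of_card_lt j hcard
  exact ⟨j i, line_eq_of_mem_of_mem (hp.ne hne) (hpl i) (hpl i') (hj i) (heq ▸ hj i')⟩

/-- Two of the three points cannot lie on `Y` or `Z` together, so one of them lies on `X`,
and it is the point `u` where `l` meets `X`. -/
lemma mem_of_mem_of_three_mem {M : Set (ℙ F (Fin 3 → F))} {X Y Z l u : ℙ F (Fin 3 → F)}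
    (hM : ∀ p ∈ M, p ∈ X ∨ p ∈ Y ∨ p ∈ Z) {p : Fin 3 → ℙ F (Fin 3 → F)} (hp : Injective p)
    (hpM : ∀ i, p i ∈ M) (hpl : ∀ i, p i ∈ l) (hX : l ≠ X) (hY : l ≠ Y) (hZ : l ≠ Z)
    (hu : u ∈ l) (huX : u ∈ X) : u ∈ M := by
  by_cases hpX : ∃ i, p i ∈ X
  · obtain ⟨i, hi⟩ := hpX
    exact point_eq_of_mem_of_mem hX (hpl i) hi hu huX ▸ hpM i
  · simp only [not_exists] at hpX
    have hYZ : ∀ i, ∃ j, p i ∈ ![Y, Z] j := fun i =>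
      ((hM _ (hpM i)).resolve_left (hpX i)).elim (⟨0, ·⟩) (⟨1, ·⟩)
    obtain ⟨j, hj⟩ := exists_line_eq_of_card_lt (by simp) hp hYZ hpl
    fin_cases j
    exacts [(hY hj).elim, (hZ hj).elim]

structure IsCollineation (f g : ℙ F (Fin 3 → F) → ℙ F (Fin 3 → F)) : Prop where
  injective_point : Injective f
  injective_line : Injective g
  map_mem : ∀ {p l}, p ∈ l → f p ∈ g l

namespace IsCollineation

variable {f g : ℙ F (Fin 3 → F) → ℙ F (Fin 3 → F)} {p q p' l m l' : ℙ F (Fin 3 → F)}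

lemma map_line_eq (hfg : IsCollineation f g) (hpq : p ≠ q) (hp : p ∈ l) (hq : q ∈ l)
    (hp' : f p ∈ l') (hq' : f q ∈ l') : g l = l' :=
  line_eq_of_mem_of_mem (hfg.injective_point.ne hpq) (hfg.map_mem hp) (hfg.map_mem hq) hp' hq'

lemma map_point_eq (hfg : IsCollineation f g) (hlm : l ≠ m) (hl : p ∈ l) (hm : p ∈ m)
    (hl' : p' ∈ g l) (hm' : p' ∈ g m) : f p = p' :=
  point_eq_of_mem_of_mem (hfg.injective_line.ne hlm) (hfg.map_mem hl) (hfg.map_mem hm) hl' hm'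

lemma map_line_eq_self (hfg : IsCollineation f g) (hpq : p ≠ q) (hp : p ∈ l) (hq : q ∈ l)
    (hfp : f p = p) (hfq : f q = q) : g l = l :=
  hfg.map_line_eq hpq hp hq (by rwa [hfp]) (by rwa [hfq])

lemma map_point_eq_self (hfg : IsCollineation f g) (hlm : l ≠ m) (hl : p ∈ l) (hm : p ∈ m)
    (hgl : g l = l) (hgm : g m = m) : f p = p :=
  hfg.map_point_eq hlm hl hm (by rwa [hgl]) (by rwa [hgm])

/-- `(0, t)` is where the line of slope `-1` through `(t, 0)` meets the `y`-axis. -/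
lemma map_pt_zero_eq_self (hfg : IsCollineation f g) {t : F} (hyAxis : g yAxis = yAxis)
    (hD : f (infPt (-1)) = infPt (-1)) (ht : f (pt t 0) = pt t 0) : f (pt 0 t) = pt 0 t :=
  hfg.map_point_eq_self (l := affLine (-1) t) (m := yAxis) (by simp) (by simp) (by simp)
    (hfg.map_line_eq_self (p := pt t 0) (q := infPt (-1)) (by simp) (by simp) (by simp) ht hD)
    hyAxis

/-- The parallel through `(0, t)` to the line joining `(0, 1)` and `(s, 0)` meets the `x`-axis
in `(t * s, 0)`. -/
lemma map_pt_mul_eq_self (hfg : IsCollineation f g) {s t : F} (hs : s ≠ 0)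
    (hxAxis : g xAxis = xAxis) (hyAxis : g yAxis = yAxis) (hInf : g lineInf = lineInf)
    (hD : f (infPt (-1)) = infPt (-1)) (hE : f (pt 0 1) = pt 0 1) (hs' : f (pt s 0) = pt s 0)
    (ht : f (pt t 0) = pt t 0) : f (pt (t * s) 0) = pt (t * s) 0 := by
  have hdir : f (infPt (-s⁻¹)) = infPt (-s⁻¹) :=
    hfg.map_point_eq_self (l := affLine (-s⁻¹) 1) (m := lineInf) (by simp) (by simp) (by simp)
      (hfg.map_line_eq_self (p := pt 0 1) (q := pt s 0) (by simp [hs.symm]) (by simp)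
        (by simp [hs]) hE hs') hInf
  exact hfg.map_point_eq_self (l := affLine (-s⁻¹) t) (m := xAxis) (by simp [hs])
    (pt_mem_affLine.2 (by field_simp; ring)) (by simp)
    (hfg.map_line_eq_self (p := pt 0 t) (q := infPt (-s⁻¹)) (by simp) (by simp) (by simp)
      (hfg.map_pt_zero_eq_self hyAxis hD ht) hdir) hxAxis

lemma eq_id_of_map_pt_eq_self (hfg : IsCollineation f g) (hx : ∀ x, f (pt x 0) = pt x 0)
    (hX : f (infPt 0) = infPt 0) (hY : f vertInf = vertInf) (hD : f (infPt (-1)) = infPt (-1)) :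
    f = id ∧ g = id := by
  have hyAxis : g yAxis = yAxis := hfg.map_line_eq_self (p := pt 0 0) (q := vertInf) (by simp)
    (by simp) (by simp) (hx 0) hY
  have hInf : g lineInf = lineInf := hfg.map_line_eq_self (p := infPt 0) (q := vertInf) (by simp)
    (by simp) (by simp) hX hY
  have hpt : ∀ x y, f (pt x y) = pt x y := fun x y =>
    hfg.map_point_eq_self (l := vertLine x) (m := affLine 0 y) (by simp) (by simp) (by simp)
      (hfg.map_line_eq_self (p := pt x 0) (q := vertInf) (by simp) (by simp) (by simp) (hx x) hY)
      (hfg.map_line_eq_self (p := pt 0 y) (q := infPt 0) (by simp) (by simp) (by simp)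
        (hfg.map_pt_zero_eq_self hyAxis hD (hx y)) hX)
  have hinf : ∀ m, f (infPt m) = infPt m := fun m =>
    hfg.map_point_eq_self (l := affLine m 0) (m := lineInf) (by simp) (by simp) (by simp)
      (hfg.map_line_eq_self (p := pt 0 0) (q := pt 1 m) (by simp) (by simp) (by simp)
        (hpt 0 0) (hpt 1 m)) hInf
  have hf : f = id := by
    funext p
    rcases exists_eq_pt_or_infPt_or_vertInf p with ⟨x, y, rfl⟩ | ⟨m, rfl⟩ | rfl
    exacts [hpt x y, hinf m, hY]
  refine ⟨hf, funext fun l => ?_⟩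
  rcases exists_eq_affLine_or_vertLine_or_lineInf l with ⟨m, k, rfl⟩ | ⟨k, rfl⟩ | rfl
  · exact hfg.map_line_eq_self (p := pt 0 k) (q := infPt m) (by simp) (by simp) (by simp)
      (hpt 0 k) (hinf m)
  · exact hfg.map_line_eq_self (p := pt k 0) (q := vertInf) (by simp) (by simp) (by simp)
      (hpt k 0) hY
  · exact hInf

lemma eq_id_of_map_eq_self {α : F} (hfg : IsCollineation f g) (hα0 : α ≠ 0)
    (hα : ∀ x ≠ 0, ∃ n : ℕ, α ^ n = x) (hO : f (pt 0 0) = pt 0 0) (h1 : f (pt 1 0) = pt 1 0)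
    (hα' : f (pt α 0) = pt α 0) (hE : f (pt 0 1) = pt 0 1) (hX : f (infPt 0) = infPt 0)
    (hY : f vertInf = vertInf) (hD : f (infPt (-1)) = infPt (-1)) : f = id ∧ g = id := by
  have hxAxis : g xAxis = xAxis := hfg.map_line_eq_self (p := pt 0 0) (q := infPt 0) (by simp)
    (by simp) (by simp) hO hX
  have hyAxis : g yAxis = yAxis := hfg.map_line_eq_self (p := pt 0 0) (q := vertInf) (by simp)
    (by simp) (by simp) hO hY
  have hInf : g lineInf = lineInf := hfg.map_line_eq_self (p := infPt 0) (q := vertInf) (by simp)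
    (by simp) (by simp) hX hY
  refine hfg.eq_id_of_map_pt_eq_self (fun x => ?_) hX hY hD
  rcases eq_or_ne x 0 with rfl | hx
  · exact hO
  obtain ⟨n, rfl⟩ := hα x hx
  induction n with
  | zero => simpa using h1
  | succ n ih =>
    rw [pow_succ]
    exact hfg.map_pt_mul_eq_self hα0 hxAxis hyAxis hInf hD hE hα' (ih (pow_ne_zero n hα0))

end IsCollineation

/-- The lines through `(x, 0)` and `(0, y)` for `(x, y) = (1, 1), (α, α), (1, α), (α², 1)` have
slopes `-1, -1, -α, -α⁻²`; their points at infinity are the last three marked points. -/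
def marked (α : F) : Set (ℙ F (Fin 3 → F)) :=
  {pt 0 0, pt 1 0, pt α 0, pt (α ^ 2) 0, pt 0 1, pt 0 α, infPt (-1), infPt (-α),
    infPt (-(α ^ 2)⁻¹)}

section Marked

variable {α : F} {p : ℙ F (Fin 3 → F)}

lemma mem_axes_of_mem_marked (hp : p ∈ marked α) : p ∈ xAxis ∨ p ∈ yAxis ∨ p ∈ lineInf := by
  simp only [marked, Set.mem_insert_iff, Set.mem_singleton_iff] at hp
  rcases hp with rfl | rfl | rfl | rfl | rfl | rfl | rfl | rfl | rfl <;> simp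

lemma exists_eq_pt_of_mem_marked_of_mem_xAxis (hα0 : α ≠ 0) (hp : p ∈ marked α)
    (hx : p ∈ xAxis) : ∃ x ∈ ({0, 1, α, α ^ 2} : Set F), p = pt x 0 := by
  simp only [marked, Set.mem_insert_iff, Set.mem_singleton_iff] at hp
  rcases hp with rfl | rfl | rfl | rfl | rfl | rfl | rfl | rfl | rfl <;> simp_all

lemma exists_eq_pt_of_mem_marked_of_mem_yAxis (hα0 : α ≠ 0) (hp : p ∈ marked α)
    (hy : p ∈ yAxis) : ∃ y ∈ ({0, 1, α} : Set F), p = pt 0 y := by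
  simp only [marked, Set.mem_insert_iff, Set.mem_singleton_iff] at hp
  rcases hp with rfl | rfl | rfl | rfl | rfl | rfl | rfl | rfl | rfl <;> simp_all

lemma exists_eq_infPt_of_mem_marked_of_mem_lineInf (hp : p ∈ marked α) (hinf : p ∈ lineInf) :
    ∃ r ∈ ({1, α, (α ^ 2)⁻¹} : Set F), p = infPt (-r) := by
  simp only [marked, Set.mem_insert_iff, Set.mem_singleton_iff] at hp
  rcases hp with rfl | rfl | rfl | rfl | rfl | rfl | rfl | rfl | rfl <;> simp_all

lemma infPt_neg_mem_marked_iff {r : F} :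
    infPt (-r) ∈ marked α ↔ r ∈ ({1, α, (α ^ 2)⁻¹} : Set F) := by
  simp [marked]

lemma infPt_zero_not_mem_marked (hα0 : α ≠ 0) : infPt 0 ∉ marked α := by
  simp [marked, hα0]

lemma vertInf_not_mem_marked : vertInf ∉ marked α := by
  simp [marked]

/-- The `y`-axis and the line at infinity carry only three marked points each, which lie on three
horizontal lines, resp. on three lines through the origin. -/
lemma eq_xAxis_of_four_marked_mem (hα0 : α ≠ 0) {p : Fin 4 → ℙ F (Fin 3 → F)} (hp : Injective p)
    (hpM : ∀ i, p i ∈ marked α) {l : ℙ F (Fin 3 → F)} (hpl : ∀ i, p i ∈ l) : l = xAxis := by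
  obtain ⟨j, hj⟩ := exists_line_eq_of_card_lt (a := ![xAxis, yAxis, lineInf]) (by simp) hp
    (fun i => (mem_axes_of_mem_marked (hpM i)).elim (⟨0, ·⟩) (·.elim (⟨1, ·⟩) (⟨2, ·⟩))) hpl
  fin_cases j
  · exact hj
  · change l = yAxis at hj
    subst hj
    have hpj : ∀ i, ∃ j, p i ∈ ![affLine 0 0, affLine 0 1, affLine 0 α] j := fun i => by
      obtain ⟨y, hy, hpy⟩ := exists_eq_pt_of_mem_marked_of_mem_yAxis hα0 (hpM i) (hpl i)
      rw [hpy]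
      rcases hy with rfl | rfl | rfl
      exacts [⟨0, by simp⟩, ⟨1, by simp⟩, ⟨2, by simp⟩]
    obtain ⟨j, hj⟩ := exists_line_eq_of_card_lt (by simp) hp hpj hpl
    fin_cases j <;> simp at hj
  · change l = lineInf at hj
    subst hj
    have hpj : ∀ i, ∃ j, p i ∈ ![affLine (-1) 0, affLine (-α) 0, affLine (-(α ^ 2)⁻¹) 0] j :=
      fun i => by
        obtain ⟨r, hr, hpr⟩ := exists_eq_infPt_of_mem_marked_of_mem_lineInf (hpM i) (hpl i)
        rw [hpr]
        rcases hr with rfl | rfl | rfl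
        exacts [⟨0, by simp⟩, ⟨1, by simp⟩, ⟨2, by simp⟩]
    obtain ⟨j, hj⟩ := exists_line_eq_of_card_lt (by simp) hp hpj hpl
    fin_cases j <;> simp at hj

end Marked

section Rigidity

variable {α : F}

lemma inv_not_mem_ratios (hα0 : α ≠ 0) (hα2 : α ^ 2 ≠ 1) :
    α⁻¹ ∉ ({1, α, (α ^ 2)⁻¹} : Set F) := by
  have hα1 : α ≠ 1 := by rintro rfl; simp at hα2
  simp only [Set.mem_insert_iff, Set.mem_singleton_iff, inv_eq_one, not_or]
  refine ⟨hα1, fun h => hα2 ?_, fun h => hα1 ?_⟩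
  · rw [sq]; nth_rewrite 1 [← h]; exact inv_mul_cancel₀ hα0
  · have := inv_injective h
    rw [sq] at this
    exact (mul_eq_left₀ hα0).1 this.symm

/-- The constraints on the images `(a, 0), (b, 0)` of `(1, 0), (α, 0)` and `(0, d), (0, e)` of
`(0, 1), (0, α)` coming from the slopes of the lines joining them. -/
lemma ratio_eq {a b d e : F} (hα0 : α ≠ 0) (hα2 : α ^ 2 ≠ 1) (hα3 : α ^ 3 ≠ 1)
    (ha : a ∈ ({1, α, α ^ 2} : Set F)) (hb : b ∈ ({1, α, α ^ 2} : Set F))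
    (hd : d ∈ ({1, α} : Set F)) (he : e ∈ ({1, α} : Set F)) (hde : d ≠ e) (h1 : d / a = e / b)
    (h2 : d / a ∈ ({1, α, (α ^ 2)⁻¹} : Set F)) (h3 : e / a ∈ ({1, α, (α ^ 2)⁻¹} : Set F))
    (h4 : d / b ∉ ({1, α, (α ^ 2)⁻¹} : Set F)) : a = 1 ∧ b = α ∧ d = 1 ∧ e = α := by
  have hα1 : α ≠ 1 := by rintro rfl; simp at hα2
  have hinv := inv_not_mem_ratios hα0 hα2
  have hcube : α * α ^ 2 ∉ ({1, α, α ^ 2} : Set F) := by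
    simp only [Set.mem_insert_iff, Set.mem_singleton_iff, not_or]
    refine ⟨fun h => hα3 (by linear_combination h), fun h => hα2 ?_, fun h => hα1 ?_⟩
    · exact mul_left_cancel₀ hα0 (by linear_combination h)
    · exact mul_left_cancel₀ (pow_ne_zero 2 hα0) (by linear_combination h)
  have ha0 : a ≠ 0 := by rcases ha with rfl | rfl | rfl <;> simp [hα0]
  have hb0 : b ≠ 0 := by rcases hb with rfl | rfl | rfl <;> simp [hα0]
  rw [div_eq_div_iff ha0 hb0] at h1
  simp only [Set.mem_insert_iff, Set.mem_singleton_iff] at hd he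
  rcases hd with hd | hd <;> rcases he with he | he <;> subst d e
  · exact absurd rfl hde
  · obtain rfl : b = α * a := by linear_combination h1
    simp only [Set.mem_insert_iff, Set.mem_singleton_iff] at ha
    rcases ha with rfl | rfl | rfl
    · simp
    · exact absurd (by rw [one_div, ← sq]; simp) h4
    · exact absurd hb hcube
  · obtain rfl : a = α * b := by linear_combination -h1
    simp only [Set.mem_insert_iff, Set.mem_singleton_iff] at hb
    rcases hb with rfl | rfl | rfl
    · exact absurd (by simpa using h3) hinv
    · exact absurd (by rwa [div_mul_cancel_left₀ hα0] at h2) hinv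
    · exact absurd ha hcube
  · exact absurd rfl hde

namespace IsCollineation

variable {f g : ℙ F (Fin 3 → F) → ℙ F (Fin 3 → F)}

lemma map_xAxis (hfg : IsCollineation f g) (hM : ∀ p, f p ∈ marked α ↔ p ∈ marked α)
    (hα0 : α ≠ 0) (hα2 : α ^ 2 ≠ 1) : g xAxis = xAxis := by
  have hα1 : α ≠ 1 := by rintro rfl; simp at hα2
  have hα : α ≠ α ^ 2 := fun h => hα1 ((mul_eq_left₀ hα0).1 (by rw [← sq, ← h]))
  have hα0' : α ^ 2 ≠ 0 := pow_ne_zero 2 hα0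
  refine eq_xAxis_of_four_marked_mem hα0 (p := fun i => f (pt (![0, 1, α, α ^ 2] i) 0))
    (hfg.injective_point.comp fun i j h => ?_) (fun i => (hM _).2 ?_)
    (fun i => hfg.map_mem (by simp))
  · fin_cases i <;> fin_cases j <;> simp_all [eq_comm]
  · fin_cases i <;> simp [marked]

/-- The line at infinity is the only line other than the axes carrying three marked points and
meeting the `x`-axis in the unmarked point `(1 : 0 : 0)`. -/
lemma map_lineInf (hfg : IsCollineation f g) (hM : ∀ p, f p ∈ marked α ↔ p ∈ marked α)
    (hα0 : α ≠ 0) (hα2 : α ^ 2 ≠ 1) (hα3 : α ^ 3 ≠ 1) : g lineInf = lineInf := by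
  have hxAxis := hfg.map_xAxis hM hα0 hα2
  have hα1 : α ≠ 1 := by rintro rfl; simp at hα2
  have h1 : (1 : F) ≠ (α ^ 2)⁻¹ := fun h => hα2 (by rw [← inv_eq_one, ← h])
  have h2 : α ≠ (α ^ 2)⁻¹ := fun h =>
    hα3 (by rw [pow_succ']; exact (mul_eq_one_iff_eq_inv₀ (pow_ne_zero 2 hα0)).2 h)
  have hp : Injective fun i => f (infPt (-(![1, α, (α ^ 2)⁻¹] i))) :=
    hfg.injective_point.comp fun i j h => by
      fin_cases i <;> fin_cases j <;> simp [hα1, h1, h2, hα1.symm, h1.symm, h2.symm] at h ⊢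
  have hu : f (infPt 0) ∉ marked α := (hM _).not.2 (infPt_zero_not_mem_marked hα0)
  have huX : f (infPt 0) ∈ xAxis := hxAxis ▸ hfg.map_mem (by simp)
  have hul : f (infPt 0) ∈ g lineInf := hfg.map_mem (by simp)
  by_contra hne
  refine hu (mem_of_mem_of_three_mem (fun _ => mem_axes_of_mem_marked) hp
    (fun i => (hM _).2 (by fin_cases i <;> simp [marked])) (fun i => hfg.map_mem (by simp))
    (fun h => ?_) (fun h => ?_) hne hul huX)
  · exact lineInf_ne_affLine (hfg.injective_line (h.trans hxAxis.symm))
  · rw [point_eq_of_mem_of_mem (l := xAxis) (m := yAxis) (by simp) huX (h ▸ hul)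
      (by simp : pt (0 : F) 0 ∈ xAxis) (by simp)] at hu
    exact hu (by simp [marked])

/-- The `y`-axis is the only line other than the `x`-axis and the line at infinity carrying three
marked points and meeting the line at infinity in the unmarked point `(0 : 1 : 0)`. -/
lemma map_yAxis (hfg : IsCollineation f g) (hM : ∀ p, f p ∈ marked α ↔ p ∈ marked α)
    (hα0 : α ≠ 0) (hα2 : α ^ 2 ≠ 1) (hα3 : α ^ 3 ≠ 1) : g yAxis = yAxis := by
  have hxAxis := hfg.map_xAxis hM hα0 hα2
  have hInf := hfg.map_lineInf hM hα0 hα2 hα3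
  have hα1 : α ≠ 1 := by rintro rfl; simp at hα2
  have hp : Injective fun i => f (pt 0 (![0, 1, α] i)) :=
    hfg.injective_point.comp fun i j h => by
      fin_cases i <;> fin_cases j <;> simp_all [eq_comm]
  have hu : f vertInf ∉ marked α := (hM _).not.2 vertInf_not_mem_marked
  have huX : f vertInf ∈ lineInf := hInf ▸ hfg.map_mem (by simp)
  have hul : f vertInf ∈ g yAxis := hfg.map_mem (by simp)
  by_contra hne
  refine hu (mem_of_mem_of_three_mem (X := lineInf) (Y := xAxis)
    (fun _ hp => (mem_axes_of_mem_marked hp).elim (.inr ∘ .inl) (·.elim (.inr ∘ .inr) .inl)) hp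
    (fun i => (hM _).2 (by fin_cases i <;> simp [marked])) (fun i => hfg.map_mem (by simp))
    (fun h => ?_) (fun h => ?_) hne hul huX)
  · exact vertLine_ne_lineInf (hfg.injective_line (h.trans hInf.symm))
  · exact vertLine_ne_affLine (hfg.injective_line (h.trans hxAxis.symm))

lemma exists_map_pt_eq (hfg : IsCollineation f g) (hM : ∀ p, f p ∈ marked α ↔ p ∈ marked α)
    (hα0 : α ≠ 0) (hxAxis : g xAxis = xAxis) (hO : f (pt 0 0) = pt 0 0) {x : F}
    (hx : x ∈ ({1, α, α ^ 2} : Set F)) :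
    ∃ x' ∈ ({1, α, α ^ 2} : Set F), f (pt x 0) = pt x' 0 := by
  simp only [Set.mem_insert_iff, Set.mem_singleton_iff] at hx
  have hx0 : x ≠ 0 := by rcases hx with rfl | rfl | rfl <;> simp [hα0]
  obtain ⟨x', hx', h⟩ := exists_eq_pt_of_mem_marked_of_mem_xAxis hα0
    ((hM (pt x 0)).2 (by rcases hx with rfl | rfl | rfl <;> simp [marked]))
    (hxAxis ▸ hfg.map_mem (l := xAxis) (by simp))
  rcases hx' with rfl | hx'
  · simpa [hx0] using hfg.injective_point (h.trans hO.symm)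
  · exact ⟨x', hx', h⟩

lemma exists_map_pt_zero_eq (hfg : IsCollineation f g)
    (hM : ∀ p, f p ∈ marked α ↔ p ∈ marked α) (hα0 : α ≠ 0) (hyAxis : g yAxis = yAxis)
    (hO : f (pt 0 0) = pt 0 0) {y : F} (hy : y ∈ ({1, α} : Set F)) :
    ∃ y' ∈ ({1, α} : Set F), f (pt 0 y) = pt 0 y' := by
  simp only [Set.mem_insert_iff, Set.mem_singleton_iff] at hy
  have hy0 : y ≠ 0 := by rcases hy with rfl | rfl <;> simp [hα0]
  obtain ⟨y', hy', h⟩ := exists_eq_pt_of_mem_marked_of_mem_yAxis hα0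
    ((hM (pt 0 y)).2 (by rcases hy with rfl | rfl <;> simp [marked]))
    (hyAxis ▸ hfg.map_mem (l := yAxis) (by simp))
  rcases hy' with rfl | hy'
  · simpa [hy0] using hfg.injective_point (h.trans hO.symm)
  · exact ⟨y', hy', h⟩

/-- The line through `(x, 0)` and `(0, y)` has slope `-(y / x)`. -/
lemma map_infPt_eq (hfg : IsCollineation f g) (hInf : g lineInf = lineInf) {x y x' y' : F}
    (hx : x ≠ 0) (hx' : x' ≠ 0) (hfx : f (pt x 0) = pt x' 0) (hfy : f (pt 0 y) = pt 0 y') :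
    f (infPt (-(y / x))) = infPt (-(y' / x')) := by
  have hl : g (affLine (-(y / x)) y) = affLine (-(y' / x')) y' :=
    hfg.map_line_eq (p := pt x 0) (q := pt 0 y) (by simp [hx])
      (pt_mem_affLine.2 (by field_simp; ring)) (by simp)
      (hfx ▸ pt_mem_affLine.2 (by field_simp; ring)) (by rw [hfy]; simp)
  exact hfg.map_point_eq (l := affLine (-(y / x)) y) (m := lineInf) (by simp) (by simp)
    (by simp) (by rw [hl]; simp) (by rw [hInf]; simp)

theorem eq_id_of_preserves_marked (hfg : IsCollineation f g)
    (hM : ∀ p, f p ∈ marked α ↔ p ∈ marked α) (hα0 : α ≠ 0) (hα2 : α ^ 2 ≠ 1)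
    (hα3 : α ^ 3 ≠ 1) (hα : ∀ x ≠ 0, ∃ n : ℕ, α ^ n = x) : f = id ∧ g = id := by
  have hxAxis := hfg.map_xAxis hM hα0 hα2
  have hInf := hfg.map_lineInf hM hα0 hα2 hα3
  have hyAxis := hfg.map_yAxis hM hα0 hα2 hα3
  have hO : f (pt 0 0) = pt 0 0 := hfg.map_point_eq_self (l := xAxis) (m := yAxis) (by simp)
    (by simp) (by simp) hxAxis hyAxis
  obtain ⟨a, ha, hfa⟩ := hfg.exists_map_pt_eq hM hα0 hxAxis hO (x := 1) (by simp)
  obtain ⟨b, hb, hfb⟩ := hfg.exists_map_pt_eq hM hα0 hxAxis hO (x := α) (by simp)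
  obtain ⟨d, hd, hfd⟩ := hfg.exists_map_pt_zero_eq hM hα0 hyAxis hO (y := 1) (by simp)
  obtain ⟨e, he, hfe⟩ := hfg.exists_map_pt_zero_eq hM hα0 hyAxis hO (y := α) (by simp)
  have ha0 : a ≠ 0 := by rcases ha with rfl | rfl | rfl <;> simp [hα0]
  have hb0 : b ≠ 0 := by rcases hb with rfl | rfl | rfl <;> simp [hα0]
  have hde : d ≠ e := by
    rintro rfl
    have := hfg.injective_point (hfd.trans hfe.symm)
    simp only [pt_inj, true_and] at this
    exact hα2 (by rw [← this, one_pow])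
  have hs11 := hfg.map_infPt_eq hInf one_ne_zero ha0 hfa hfd
  have hsαα := hfg.map_infPt_eq hInf hα0 hb0 hfb hfe
  have hs1α := hfg.map_infPt_eq hInf one_ne_zero ha0 hfa hfe
  have hsα1 := hfg.map_infPt_eq hInf hα0 hb0 hfb hfd
  rw [div_self hα0] at hsαα
  rw [div_one] at hs11 hs1α
  rw [one_div] at hsα1
  obtain ⟨rfl, rfl, rfl, rfl⟩ := ratio_eq hα0 hα2 hα3 ha hb hd he hde
    (by simpa using hs11.symm.trans hsαα)
    (infPt_neg_mem_marked_iff.1 (hs11 ▸ (hM _).2 (by simp [marked])))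
    (infPt_neg_mem_marked_iff.1 (hs1α ▸ (hM _).2 (by simp [marked])))
    (fun h => inv_not_mem_ratios hα0 hα2
      (infPt_neg_mem_marked_iff.1 ((hM _).1 (hsα1 ▸ infPt_neg_mem_marked_iff.2 h))))
  exact hfg.eq_id_of_map_eq_self hα0 hα hO hfa hfb hfd
    (hfg.map_point_eq_self (l := xAxis) (m := lineInf) (by simp) (by simp) (by simp) hxAxis hInf)
    (hfg.map_point_eq_self (l := yAxis) (m := lineInf) (by simp) (by simp) (by simp) hyAxis hInf)
    (by simpa using hs11)

end IsCollineation

end Rigidity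

/-- The plane `c ⬝ᵥ v = 0` of the line `l = (c)`, written through duality so that its dimension
and its injectivity in `l` are library facts. -/
def lineSubmodule (l : ℙ F (Fin 3 → F)) : Submodule F (Fin 3 → F) :=
  (l.submodule.map (dotProductEquiv F (Fin 3) : (Fin 3 → F) →ₗ[F] Dual F (Fin 3 → F))
    ).dualCoannihilator

lemma submodule_le_lineSubmodule_iff {p l : ℙ F (Fin 3 → F)} :
    p.submodule ≤ lineSubmodule l ↔ p ∈ l := by
  induction p using Projectivization.ind with | h v hv => ?_
  induction l using Projectivization.ind with | h c hc => ?_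
  rw [lineSubmodule, ← Submodule.le_dualAnnihilator_iff_le_dualCoannihilator, submodule_mk,
    submodule_mk, Submodule.map_span, Set.image_singleton, Submodule.span_singleton_le_iff_mem,
    Submodule.mem_dualAnnihilator, mk_mem_mk_iff, dotProduct_comm]
  simp only [Submodule.mem_span_singleton, forall_exists_index, forall_apply_eq_imp_iff,
    LinearEquiv.coe_coe, dotProductEquiv_apply_apply, dotProduct_smul, smul_eq_zero]
  exact ⟨fun h => (h 1).resolve_left one_ne_zero, fun h _ => .inr h⟩

lemma finrank_lineSubmodule (l : ℙ F (Fin 3 → F)) : finrank F (lineSubmodule l) = 2 := by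
  have h := Subspace.finrank_add_finrank_dualAnnihilator_eq
    (l.submodule.map (dotProductEquiv F (Fin 3) : (Fin 3 → F) →ₗ[F] Dual F (Fin 3 → F)))
  rw [LinearEquiv.finrank_map_eq, finrank_submodule, Subspace.dual_finrank_eq,
    finrank_fin_fun] at h
  rw [lineSubmodule, Subspace.finrank_dualCoannihilator_eq]
  omega

lemma lineSubmodule_injective : Injective (lineSubmodule (F := F)) := by
  intro l m h
  have := congrArg Submodule.dualAnnihilator h
  simp only [lineSubmodule, Subspace.dualCoannihilator_dualAnnihilator_eq] at this
  exact submodule_injective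
    (Submodule.map_injective_of_injective (dotProductEquiv F (Fin 3)).injective this)

lemma exists_lineSubmodule_eq {W : Submodule F (Fin 3 → F)} (hW : finrank F W = 2) :
    ∃ l, lineSubmodule l = W := by
  have h := Subspace.finrank_add_finrank_dualAnnihilator_eq W
  rw [hW, finrank_fin_fun] at h
  refine ⟨mk'' (W.dualAnnihilator.map
    ((dotProductEquiv F (Fin 3)).symm : Dual F (Fin 3 → F) →ₗ[F] (Fin 3 → F)))
    (by rw [LinearEquiv.finrank_map_eq]; omega), ?_⟩
  rw [lineSubmodule, submodule_mk'', ← Submodule.map_comp]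
  simp [Subspace.dualAnnihilator_dualCoannihilator_eq]

abbrev LeviVertex (F : Type*) [Field F] :=
  {W : Submodule F (Fin 3 → F) // finrank F W = 1 ∨ finrank F W = 2}

def pointVertex (p : ℙ F (Fin 3 → F)) : LeviVertex F := ⟨p.submodule, .inl p.finrank_submodule⟩

def lineVertex (l : ℙ F (Fin 3 → F)) : LeviVertex F :=
  ⟨lineSubmodule l, .inr (finrank_lineSubmodule l)⟩

lemma leviGraph_adj_pointVertex_lineVertex {p l : ℙ F (Fin 3 → F)} :
    (LeviGraph F).Adj (pointVertex p) (lineVertex l) ↔ p ∈ l := by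
  simp [LeviGraph, pointVertex, lineVertex, finrank_submodule, finrank_lineSubmodule,
    submodule_le_lineSubmodule_iff]

lemma finrank_pointVertex (p : ℙ F (Fin 3 → F)) : finrank F (pointVertex p).1 = 1 :=
  p.finrank_submodule

lemma exists_eq_pointVertex {v : LeviVertex F} (hv : finrank F v.1 = 1) :
    ∃ p, v = pointVertex p :=
  ⟨mk'' v.1 hv, Subtype.ext (submodule_mk'' v.1 hv).symm⟩

lemma exists_eq_lineVertex {v : LeviVertex F} (hv : finrank F v.1 = 2) :
    ∃ l, v = lineVertex l :=
  let ⟨l, hl⟩ := exists_lineSubmodule_eq hv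
  ⟨l, Subtype.ext hl.symm⟩

lemma pointVertex_injective : Injective (pointVertex (F := F)) :=
  fun _ _ h => submodule_injective (congrArg Subtype.val h)

lemma lineVertex_injective : Injective (lineVertex (F := F)) :=
  fun _ _ h => lineSubmodule_injective (congrArg Subtype.val h)

open scoped Classical in
noncomputable def leviColoring (M : Set (ℙ F (Fin 3 → F))) : (LeviGraph F).Coloring (Fin 3) :=
  SimpleGraph.Coloring.mk
    (fun v => if finrank F v.1 = 2 then 2
      else if v.1 ∈ Projectivization.submodule '' M then 0 else 1)
    (by rintro u v (⟨hu, hv, -⟩ | ⟨hu, hv, -⟩) <;> simp [hu, hv] <;> split_ifs <;> decide)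

lemma leviColoring_eq_two_iff {M : Set (ℙ F (Fin 3 → F))} {v : LeviVertex F} :
    leviColoring M v = 2 ↔ finrank F v.1 = 2 := by
  simp only [leviColoring, SimpleGraph.Coloring.mk, RelHom.coeFn_mk]
  split_ifs <;> simp_all

lemma leviColoring_pointVertex_eq_zero_iff {M : Set (ℙ F (Fin 3 → F))}
    {p : ℙ F (Fin 3 → F)} : leviColoring M (pointVertex p) = 0 ↔ p ∈ M := by
  have hp : finrank F p.submodule ≠ 2 := by rw [p.finrank_submodule]; decide
  simp only [leviColoring, SimpleGraph.Coloring.mk, RelHom.coeFn_mk, pointVertex, if_neg hp]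
  split_ifs <;> simp_all [submodule_injective.eq_iff]

theorem isDistinguishing_leviColoring {M : Set (ℙ F (Fin 3 → F))}
    (hM : ∀ f g, IsCollineation f g → (∀ p, f p ∈ M ↔ p ∈ M) → f = id ∧ g = id) :
    IsDistinguishing (LeviGraph F) (leviColoring M) := by
  intro σ hσ hσM
  have hrank : ∀ v, finrank F (σ v).1 = 2 ↔ finrank F v.1 = 2 := fun v => by
    rw [← leviColoring_eq_two_iff, ← leviColoring_eq_two_iff, hσM]
  have hpt : ∀ p, ∃ q, σ (pointVertex p) = pointVertex q := fun p =>
    exists_eq_pointVertex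
      ((σ _).2.resolve_right ((hrank _).not.2 (by rw [finrank_pointVertex]; decide)))
  have hln : ∀ l, ∃ m, σ (lineVertex l) = lineVertex m := fun l =>
    exists_eq_lineVertex ((hrank _).2 (finrank_lineSubmodule l))
  choose f hf using hpt
  choose g hg using hln
  have hfg : IsCollineation f g :=
    { injective_point := fun p q h => pointVertex_injective (σ.injective (by rw [hf, hf, h]))
      injective_line := fun l m h => lineVertex_injective (σ.injective (by rw [hg, hg, h]))
      map_mem := fun {p l} h => by
        rw [← leviGraph_adj_pointVertex_lineVertex, ← hf, ← hg, hσ]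
        exact leviGraph_adj_pointVertex_lineVertex.2 h }
  have hfM : ∀ p, f p ∈ M ↔ p ∈ M := fun p => by
    rw [← leviColoring_pointVertex_eq_zero_iff, ← hf, hσM, leviColoring_pointVertex_eq_zero_iff]
  obtain ⟨rfl, rfl⟩ := hM f g hfg hfM
  refine Equiv.ext fun v => ?_
  rcases v.2 with h | h
  · obtain ⟨p, rfl⟩ := exists_eq_pointVertex h
    exact hf p
  · obtain ⟨l, rfl⟩ := exists_eq_lineVertex h
    exact hg l

end LeviDistinguishing

theorem stmt3_general (q : ℕ) (hq5 : 5 ≤ q)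
    (F : Type) [Field F] [Fintype F] (hF : Fintype.card F = q) :
    ∃ (C : (LeviGraph F).Coloring (Fin 3)) (c : Fin 3),
      IsDistinguishing (LeviGraph F) C ∧
      (∀ v : {W : Submodule F (Fin 3 → F) //
          Module.finrank F W = 1 ∨ Module.finrank F W = 2},
        Module.finrank F v.1 = 2 → C v = c) ∧
      (∀ v : {W : Submodule F (Fin 3 → F) //
          Module.finrank F W = 1 ∨ Module.finrank F W = 2},
        Module.finrank F v.1 = 1 → C v ≠ c) := by
  obtain ⟨α, hα0, hα2, hα3, hα⟩ := FiniteField.exists_generator_of_five_le_card (hF ▸ hq5)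
  open LeviDistinguishing in
  exact ⟨leviColoring (marked α), 2,
    isDistinguishing_leviColoring fun _ _ hfg hM => hfg.eq_id_of_preserves_marked hM hα0 hα2 hα3 hα,
    fun _ hv => leviColoring_eq_two_iff.2 hv,
    fun _ hv => by rw [ne_eq, leviColoring_eq_two_iff, hv]; decide⟩

/-- For every prime power `q ≥ 5`, the Levi graph `LG_q` admits a proper distinguishing
3-coloring in which all line-vertices receive one single color and the point-vertices
are colored with the other two colors. -/
theorem stmt3 (q : ℕ) (hq : IsPrimePow q) (hq5 : 5 ≤ q)
    (F : Type) [Field F] [Fintype F] (hF : Fintype.card F = q) :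
    ∃ (C : (LeviGraph F).Coloring (Fin 3)) (c : Fin 3),
      IsDistinguishing (LeviGraph F) C ∧
      (∀ v : {W : Submodule F (Fin 3 → F) //
          Module.finrank F W = 1 ∨ Module.finrank F W = 2},
        Module.finrank F v.1 = 2 → C v = c) ∧
      (∀ v : {W : Submodule F (Fin 3 → F) //
          Module.finrank F W = 1 ∨ Module.finrank F W = 2},
        Module.finrank F v.1 = 1 → C v ≠ c) :=
  stmt3_general q hq5 F hF
end

section
/- Let q be a prime power, F_q the finite field with q elements, and let A be an invertible 3×3 matrix over F_q that is not a scalar multiple of the identity. Then the number of 1-dimensional subspaces W of F_q³ with A(W) = W is at most q + 2. -/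
/-! Every invariant line is spanned by an eigenvector, so it lies in some eigenspace `E c`.
Fix the eigenvalue `c₀` of one invariant line: all invariant lines lie in `E c₀` or in
`U = ⨆ c ≠ c₀, E c`, and `E c₀ ∩ U = 0`, so `dim E c₀ + dim U ≤ 3`. Since `A` is not scalar,
`1 ≤ dim E c₀ ≤ 2`. A space of dimension `d` has `1 + q + ⋯ + q ^ (d - 1)` lines, so there are at
most `(q + 1) + 1` or `1 + (q + 1)` invariant lines. -/

open Module Submodule Finset

variable {K V : Type*} [Field K] [AddCommGroup V] [Module K V]

namespace Submodule

def lines (U : Submodule K V) : Set (Submodule K V) := {W | finrank K W = 1 ∧ W ≤ U}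

theorem lines_eq_image (U : Submodule K V) :
    U.lines = map U.subtype '' {H : Submodule K U | finrank K H = 1} := by
  ext W
  constructor
  · rintro ⟨hW, hWU⟩
    refine ⟨comap U.subtype W, ?_, ?_⟩
    · rwa [Set.mem_ofPred_eq, ← finrank_map_subtype_eq, map_comap_subtype, inf_eq_right.2 hWU]
    · rw [map_comap_subtype, inf_eq_right.2 hWU]
  · rintro ⟨H, hH, rfl⟩
    exact ⟨(finrank_map_subtype_eq U H).trans hH, map_subtype_le U H⟩

theorem ncard_lines [Finite K] (U : Submodule K V) :
    U.lines.ncard = ∑ i ∈ range (finrank K U), Nat.card K ^ i := by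
  rw [lines_eq_image,
    Set.ncard_image_of_injective _ (map_injective_of_injective U.injective_subtype), Set.ncard_def,
    ← Projectivization.card_of_finrank K U rfl]
  exact Nat.card_congr (Projectivization.equivSubmodule K U).symm

end Submodule

namespace Module.End

def invariantLines (f : End K V) : Set (Submodule K V) := {W | finrank K W = 1 ∧ W.map f = W}

theorem exists_le_eigenspace_of_finrank_eq_one {f : End K V} {W : Submodule K V}
    (hW : finrank K W = 1) (hfW : W.map f ≤ W) : ∃ c, W ≤ f.eigenspace c := by
  obtain ⟨c, hc, -⟩ := LinearMap.existsUnique_eq_smul_id_of_finrank_eq_one hW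
    (f.restrict fun _ hx ↦ hfW (mem_map_of_mem hx))
  exact ⟨c, fun w hw ↦
    mem_eigenspace_iff.2 (congr_arg Subtype.val (LinearMap.congr_fun hc ⟨w, hw⟩))⟩

theorem finrank_eigenspace_add_finrank_iSup_eigenspace_le [FiniteDimensional K V]
    (f : End K V) (c₀ : K) :
    finrank K (f.eigenspace c₀) + finrank K (⨆ c ≠ c₀, f.eigenspace c : Submodule K V) ≤
      finrank K V :=
  finrank_add_finrank_le_of_disjoint (f.eigenspaces_iSupIndep c₀)

theorem finrank_eigenspace_lt [FiniteDimensional K V] {f : End K V} {c : K}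
    (hf : f ≠ c • 1) : finrank K (f.eigenspace c) < finrank K V := by
  refine Submodule.finrank_lt (fun h ↦ hf ?_)
  rwa [eigenspace_def, LinearMap.ker_eq_top, sub_eq_zero] at h

theorem invariantLines_subset_lines_union (f : End K V) (c₀ : K) :
    f.invariantLines ⊆ (f.eigenspace c₀).lines ∪ (⨆ c ≠ c₀, f.eigenspace c).lines := by
  rintro W ⟨hW, hfW⟩
  obtain ⟨c, hc⟩ := exists_le_eigenspace_of_finrank_eq_one hW hfW.le
  by_cases h : c = c₀
  · exact Or.inl ⟨hW, h ▸ hc⟩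
  · exact Or.inr ⟨hW, hc.trans (le_biSup f.eigenspace h)⟩

end Module.End

theorem geom_sum_add_geom_sum_le (q : ℕ) {m n : ℕ} (hm : 1 ≤ m) (hm' : m ≤ 2) (hmn : m + n ≤ 3) :
    ∑ i ∈ range m, q ^ i + ∑ i ∈ range n, q ^ i ≤ q + 2 := by
  have hn : n ≤ 2 := by omega
  interval_cases m <;> interval_cases n <;> simp [sum_range_succ] <;> omega

theorem stmt4_general (q : ℕ)
    (F : Type) [Field F] [Fintype F] (hF : Fintype.card F = q)
    (A : Matrix (Fin 3) (Fin 3) F)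
    (hscalar : ∀ c : F, A ≠ c • (1 : Matrix (Fin 3) (Fin 3) F)) :
    Nat.card {W : Submodule F (Fin 3 → F) //
      Module.finrank F W = 1 ∧ Submodule.map A.mulVecLin W = W} ≤ q + 2 := by
  set f : End F (Fin 3 → F) := A.mulVecLin
  change f.invariantLines.ncard ≤ q + 2
  obtain hempty | ⟨W, hW, hfW⟩ := f.invariantLines.eq_empty_or_nonempty
  · simp [hempty]
  obtain ⟨c₀, hc₀⟩ := End.exists_le_eigenspace_of_finrank_eq_one hW hfW.le
  have hpos : 1 ≤ finrank F (f.eigenspace c₀) := hW ▸ Submodule.finrank_mono hc₀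
  have hlt : finrank F (f.eigenspace c₀) < finrank F (Fin 3 → F) :=
    End.finrank_eigenspace_lt fun h ↦ hscalar c₀ <| Matrix.toLin'.injective <| by
      rwa [map_smul, Matrix.toLin'_one, Matrix.toLin'_apply']
  have hsum := f.finrank_eigenspace_add_finrank_iSup_eigenspace_le c₀
  rw [finrank_fin_fun] at hlt hsum
  calc _ ≤ _ := Set.ncard_le_ncard (f.invariantLines_subset_lines_union c₀)
    _ ≤ _ := Set.ncard_union_le _ _
    _ ≤ q + 2 := by
      rw [ncard_lines, ncard_lines, Nat.card_eq_fintype_card, hF]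
      exact geom_sum_add_geom_sum_le q hpos (by omega) hsum

/-- If `A` is an invertible 3×3 matrix over `F_q` that is not a scalar multiple of
the identity, then `A` fixes at most `q + 2` of the 1-dimensional subspaces
(projective points) of `F_q³`. -/
theorem stmt4 (q : ℕ) (hq : IsPrimePow q)
    (F : Type) [Field F] [Fintype F] (hF : Fintype.card F = q)
    (A : Matrix (Fin 3) (Fin 3) F) (hA : IsUnit A)
    (hscalar : ∀ c : F, A ≠ c • (1 : Matrix (Fin 3) (Fin 3) F)) :
    Nat.card {W : Submodule F (Fin 3 → F) //
      Module.finrank F W = 1 ∧ Submodule.map A.mulVecLin W = W} ≤ q + 2 :=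
  stmt4_general q F hF A hscalar
end

section
/- Let n, k be integers with k ≥ 2, 2k < n and n > 4. For a non-identity permutation σ of [n] = {1,…,n}, let F_σ denote the number of k-element subsets h of [n] with σ(h) = h (setwise). Then F_σ ≤ C(n−2, k−2) + C(n−2, k), and equality holds if and only if σ is a transposition. -/
/-!
Pick a point `a` moved by `σ`. A `σ`-invariant set contains both of `a` and `σ a` or neither,
so it is one of the `C(n-2, k-2)` `k`-sets containing the pair or one of the `C(n-2, k)` avoiding
it. Conversely, for a transposition every such set is invariant, and if every `k`-set avoiding
the pair is invariant then, as `0 < k < n - 2`, `σ` fixes every point outside the pair, so `σ`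
is the transposition of `a` and `σ a`.
-/

open Finset Equiv

section InvariantSubsets

variable {α : Type*} [DecidableEq α]

lemma Equiv.Perm.apply_mem_iff_of_image_eq {σ : Perm α} {h : Finset α} (hh : h.image σ = h)
    (x : α) : σ x ∈ h ↔ x ∈ h := by
  conv_lhs => rw [← hh]
  exact σ.injective.mem_finset_image

variable [Fintype α]

def invariantSubsets (σ : Perm α) (k : ℕ) : Finset (Finset α) :=
  univ.filter fun h => h.card = k ∧ h.image σ = h

def unsplitSubsets (s : Finset α) (k : ℕ) : Finset (Finset α) :=
  (powersetCard k univ).filter fun h => s ⊆ h ∨ Disjoint s h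

lemma mem_invariantSubsets {σ : Perm α} {k : ℕ} {h : Finset α} :
    h ∈ invariantSubsets σ k ↔ h.card = k ∧ h.image σ = h := by
  simp [invariantSubsets]

lemma mem_unsplitSubsets {s : Finset α} {k : ℕ} {h : Finset α} :
    h ∈ unsplitSubsets s k ↔ h.card = k ∧ (s ⊆ h ∨ Disjoint s h) := by
  simp [unsplitSubsets]

lemma invariantSubsets_subset_unsplitSubsets (σ : Perm α) (a : α) (k : ℕ) :
    invariantSubsets σ k ⊆ unsplitSubsets {a, σ a} k := by
  intro h hh
  obtain ⟨hcard, hinv⟩ := mem_invariantSubsets.1 hh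
  refine mem_unsplitSubsets.2 ⟨hcard, ?_⟩
  have hσa := σ.apply_mem_iff_of_image_eq hinv a
  by_cases ha : a ∈ h
  · exact Or.inl (insert_subset ha (singleton_subset_iff.2 (hσa.2 ha)))
  · exact Or.inr (disjoint_insert_left.2 ⟨ha, disjoint_singleton_left.2 (mt hσa.1 ha)⟩)

lemma unsplitSubsets_support_subset_invariantSubsets (σ : Perm α) (k : ℕ) :
    unsplitSubsets σ.support k ⊆ invariantSubsets σ k := by
  intro h hh
  obtain ⟨hcard, hsupp | hdisj⟩ := mem_unsplitSubsets.1 hh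
  · refine mem_invariantSubsets.2 ⟨hcard, ?_⟩
    exact (map_eq_image _ _).symm.trans (map_perm fun x hx => hsupp (Perm.mem_support.2 hx))
  · refine mem_invariantSubsets.2 ⟨hcard, ?_⟩
    rw [image_congr fun x hx => Perm.notMem_support.1 (disjoint_right.1 hdisj hx), image_id']

lemma card_unsplitSubsets {s : Finset α} (hs : s.Nonempty) {k : ℕ} (hk : s.card ≤ k) :
    (unsplitSubsets s k).card =
      (Fintype.card α - s.card).choose (k - s.card) + (Fintype.card α - s.card).choose k := by
  have hdisj : (powersetCard k univ).filter (Disjoint s ·) = powersetCard k sᶜ := by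
    ext h
    simp [subset_compl_iff_disjoint_left, and_comm]
  rw [unsplitSubsets, filter_or, card_union_of_disjoint, hdisj, card_powersetCard, card_compl,
    card_filter_powersetCard_subset s univ k (subset_univ s) hk, card_univ]
  exact disjoint_filter.2 fun h _ hsub hdisj =>
    hs.ne_empty ((disjoint_self_iff_empty s).1 (hdisj.mono_right hsub))

lemma Equiv.Perm.apply_eq_self_of_powersetCard_subset_invariantSubsets {σ : Perm α} {k : ℕ}
    {U : Finset α} (hk : 0 < k) (hkU : k < U.card)
    (hU : U.powersetCard k ⊆ invariantSubsets σ k) {x : α} (hx : x ∈ U) : σ x = x := by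
  by_contra hne
  have hxU : x ∈ U.erase (σ x) := mem_erase.2 ⟨Ne.symm hne, hx⟩
  obtain ⟨h, hxh, hhU, hcard⟩ : ∃ h, {x} ⊆ h ∧ h ⊆ U.erase (σ x) ∧ h.card = k :=
    exists_subsuperset_card_eq (singleton_subset_iff.2 hxU) (by rw [card_singleton]; exact hk)
      (by have := pred_card_le_card_erase (s := U) (a := σ x); omega)
  have hinv := (mem_invariantSubsets.1
    (hU (mem_powersetCard.2 ⟨hhU.trans (erase_subset _ _), hcard⟩))).2
  have hσx : σ x ∈ h := (σ.apply_mem_iff_of_image_eq hinv x).2 (singleton_subset_iff.1 hxh)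
  exact notMem_erase (σ x) U (hhU hσx)

lemma Equiv.Perm.isSwap_of_unsplitSubsets_subset_invariantSubsets {σ : Perm α} {a : α}
    (ha : σ a ≠ a) {k : ℕ} (hk : 0 < k) (hkα : k + 2 < Fintype.card α)
    (hsub : unsplitSubsets {a, σ a} k ⊆ invariantSubsets σ k) : σ.IsSwap := by
  have hcompl : ({a, σ a}ᶜ : Finset α).powersetCard k ⊆ unsplitSubsets {a, σ a} k := by
    intro h hh
    obtain ⟨hhc, hcard⟩ := mem_powersetCard.1 hh
    exact mem_unsplitSubsets.2 ⟨hcard, Or.inr (subset_compl_iff_disjoint_left.1 hhc)⟩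
  have hfix : ∀ x ∉ ({a, σ a} : Finset α), σ x = x := fun x hx =>
    σ.apply_eq_self_of_powersetCard_subset_invariantSubsets hk
      (by rw [card_compl, card_pair ha.symm]; omega) (hcompl.trans hsub) (mem_compl.2 hx)
  have hsupp : σ.support ⊆ {a, σ a} := fun x hx => by
    by_contra hx'
    exact Perm.mem_support.1 hx (hfix x hx')
  have hne : σ ≠ 1 := fun h => ha (by rw [h, Perm.one_apply])
  refine Perm.card_support_eq_two.1 (le_antisymm ?_ (Perm.two_le_card_support_of_ne_one hne))
  exact (card_le_card hsupp).trans card_le_two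

lemma Equiv.Perm.IsSwap.support_eq_pair {σ : Perm α} (hσ : σ.IsSwap) {a : α}
    (ha : σ a ≠ a) : σ.support = {a, σ a} := by
  refine (eq_of_subset_of_card_le (fun x hx => ?_) ?_).symm
  · rcases mem_insert.1 hx with rfl | hx
    · exact Perm.mem_support.2 ha
    · exact mem_singleton.1 hx ▸ Perm.apply_mem_support.2 (Perm.mem_support.2 ha)
  · rw [Perm.card_support_eq_two.2 hσ, card_pair ha.symm]

end InvariantSubsets

theorem stmt5_general (n k : ℕ) (hk : 2 ≤ k) (h2k : 2 * k < n)
    (σ : Equiv.Perm (Fin n)) (hσ : σ ≠ 1) :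
    ((Finset.univ : Finset (Finset (Fin n))).filter
        (fun h => h.card = k ∧ h.image σ = h)).card
      ≤ Nat.choose (n - 2) (k - 2) + Nat.choose (n - 2) k ∧
    (((Finset.univ : Finset (Finset (Fin n))).filter
        (fun h => h.card = k ∧ h.image σ = h)).card
      = Nat.choose (n - 2) (k - 2) + Nat.choose (n - 2) k ↔ σ.IsSwap) := by
  change (invariantSubsets σ k).card ≤ _ ∧ ((invariantSubsets σ k).card = _ ↔ _)
  obtain ⟨a, ha⟩ : ∃ a, σ a ≠ a := not_forall.1 fun h => hσ (Equiv.ext h)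
  have hsub := invariantSubsets_subset_unsplitSubsets σ a k
  have hcard : (unsplitSubsets {a, σ a} k).card = (n - 2).choose (k - 2) + (n - 2).choose k := by
    rw [card_unsplitSubsets (insert_nonempty _ _) (card_pair ha.symm ▸ hk), card_pair ha.symm,
      Fintype.card_fin]
  refine ⟨hcard ▸ card_le_card hsub, fun heq => ?_, fun hswap => ?_⟩
  · exact σ.isSwap_of_unsplitSubsets_subset_invariantSubsets ha (by omega)
      (by rw [Fintype.card_fin]; omega) (eq_of_subset_of_card_le hsub (by omega)).ge
  · have hsupp := hswap.support_eq_pair ha ▸ unsplitSubsets_support_subset_invariantSubsets σ k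
    rw [subset_antisymm hsub hsupp, hcard]

/-- Let `2 ≤ k`, `2k < n`, `n > 4`. For a non-identity permutation `σ` of `[n]`, the
number `F_σ` of `k`-element subsets fixed setwise by `σ` satisfies
`F_σ ≤ C(n-2, k-2) + C(n-2, k)`, with equality if and only if `σ` is a transposition. -/
theorem stmt5 (n k : ℕ) (hk : 2 ≤ k) (h2k : 2 * k < n) (hn : 4 < n)
    (σ : Equiv.Perm (Fin n)) (hσ : σ ≠ 1) :
    ((Finset.univ : Finset (Finset (Fin n))).filter
        (fun h => h.card = k ∧ h.image σ = h)).card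
      ≤ Nat.choose (n - 2) (k - 2) + Nat.choose (n - 2) k ∧
    (((Finset.univ : Finset (Finset (Fin n))).filter
        (fun h => h.card = k ∧ h.image σ = h)).card
      = Nat.choose (n - 2) (k - 2) + Nat.choose (n - 2) k ↔ σ.IsSwap) :=
  stmt5_general n k hk h2k σ hσ
end

section
/- Let q ≥ 3 be a prime and let S ⊆ F_q be any subset with |S| = (q−1)/2. Then the chromatic number of the graph G_S equals q. -/
/-!
Colour a point `v` by the intercept `v.2 - c * v.1` of the line of slope `c` through it. Two points
share a colour exactly when they lie on a common line of slope `c`, so for `c ∉ S` this is a proper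
colouring with `q` colours. Conversely, for `s ∈ S` every non-vertical line of slope `s` is a clique
on `q` points. Since `1 ≤ (q - 1) / 2 < q`, both a slope in `S` and one outside it exist.
-/

/-- The graph `G_S` on vertex set `F_q²`: `u = (u₁,u₂)` and `v = (v₁,v₂)` are adjacent
iff `u₁ ≠ v₁` and `(v₂ - u₂)(v₁ - u₁)⁻¹ ∈ S`. -/
def GS (q : ℕ) [Fact (Nat.Prime q)] (S : Finset (ZMod q)) :
    SimpleGraph (ZMod q × ZMod q) where
  Adj u v := u.1 ≠ v.1 ∧ (v.2 - u.2) * (v.1 - u.1)⁻¹ ∈ S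
  symm := by
    constructor
    rintro u v ⟨h1, h2⟩
    refine ⟨h1.symm, ?_⟩
    have h : (u.2 - v.2) * (u.1 - v.1)⁻¹ = (v.2 - u.2) * (v.1 - u.1)⁻¹ := by
      rw [show u.2 - v.2 = -(v.2 - u.2) by ring, show u.1 - v.1 = -(v.1 - u.1) by ring,
        inv_neg, neg_mul_neg]
    rwa [h]
  loopless := by
    constructor
    rintro u ⟨h1, _⟩
    exact h1 rfl

theorem slope_eq_iff_intercept_eq {K : Type*} [Field K] {u v : K × K} (h : u.1 ≠ v.1) (c : K) :
    (v.2 - u.2) * (v.1 - u.1)⁻¹ = c ↔ u.2 - c * u.1 = v.2 - c * v.1 := by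
  have hne : v.1 - u.1 ≠ 0 := sub_ne_zero.mpr h.symm
  rw [mul_inv_eq_iff_eq_mul₀ hne]
  constructor <;> intro h' <;> linear_combination -h'

namespace GS

variable {q : ℕ} [Fact q.Prime] {S : Finset (ZMod q)}

theorem colorable_of_notMem {c : ZMod q} (hc : c ∉ S) : (GS q S).Colorable q := by
  let C : (GS q S).Coloring (ZMod q) :=
    SimpleGraph.Coloring.mk (fun v => v.2 - c * v.1) fun {u v} ⟨hne, hslope⟩ hcol =>
      hc ((slope_eq_iff_intercept_eq hne c).mpr hcol ▸ hslope)
  simpa using C.colorable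

theorem le_of_colorable {s : ZMod q} (hs : s ∈ S) {n : ℕ} (hn : (GS q S).Colorable n) : q ≤ n := by
  have hline : Pairwise fun x y : ZMod q => (GS q S).Adj (x, s * x) (y, s * y) := by
    intro x y hxy
    refine ⟨hxy, ?_⟩
    rwa [slope_eq_iff_intercept_eq hxy s |>.mpr (by ring)]
  simpa using hn.card_le_of_pairwise_adj _ hline

end GS

/-- For a prime `q ≥ 3` and any `S ⊆ F_q` with `|S| = (q-1)/2`, the chromatic number
of `G_S` equals `q`. -/
theorem stmt9 (q : ℕ) [Fact (Nat.Prime q)] (hq : 3 ≤ q)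
    (S : Finset (ZMod q)) (hS : S.card = (q - 1) / 2) :
    chromNum (GS q S) = q := by
  obtain ⟨s, hs⟩ : S.Nonempty := Finset.card_pos.mp (by omega)
  obtain ⟨c, hc⟩ : ∃ c, c ∉ S := by
    by_contra! h
    have : S.card = q := by rw [Finset.eq_univ_of_forall h, Finset.card_univ, ZMod.card]
    omega
  have hcol := GS.colorable_of_notMem hc
  exact le_antisymm (Nat.sInf_le hcol) (le_csInf ⟨q, hcol⟩ fun _ => GS.le_of_colorable hs)
end

section
/- Let r ≥ 3 and n ≥ 2r + 1. Then every proper coloring of the complement of the Kneser graph K(n,r) is distinguishing: for any proper coloring, the only automorphism of the graph that maps every color class to itself is the identity. Consequently, the distinguishing chromatic number of the complement of K(n,r) equals its chromatic number. -/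
def KneserCompl (n r : ℕ) : SimpleGraph {s : Finset (Fin n) // s.card = r} where
  Adj a b := a ≠ b ∧ (a.1 ∩ b.1).Nonempty
  symm := by
    constructor
    rintro a b ⟨h1, h2⟩
    refine ⟨h1.symm, ?_⟩
    rwa [Finset.inter_comm]
  loopless := by
    constructor
    rintro a ⟨h1, _⟩
    exact h1 rfl

open Finset

namespace Nat

theorem choose_lt_choose_of_lt {a b k : ℕ} (hk : 0 < k) (hkb : k ≤ b) (hab : a < b) :
    a.choose k < b.choose k := by
  obtain ⟨m, rfl⟩ : ∃ m, b = m + 1 := ⟨b - 1, by omega⟩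
  obtain ⟨j, rfl⟩ : ∃ j, k = j + 1 := ⟨k - 1, by omega⟩
  have hpos : 0 < m.choose j := choose_pos (by omega)
  calc a.choose (j + 1) ≤ m.choose (j + 1) := choose_le_choose _ (by omega)
    _ < m.choose j + m.choose (j + 1) := by omega
    _ = (m + 1).choose (j + 1) := (choose_succ_succ m j).symm

end Nat

namespace Finset

variable {α : Type*} [DecidableEq α]

theorem inter_eq_of_card_eq_add_one {D X Y : Finset α} (hDX : D ⊆ X) (hDY : D ⊆ Y)
    (hX : #X = #D + 1) (hY : #Y = #D + 1) (hXY : X ≠ Y) : X ∩ Y = D := by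
  have hlt : #(X ∩ Y) < #X := card_lt_card ⟨inter_subset_left, fun hsub =>
    hXY (eq_of_subset_of_card_le (hsub.trans inter_subset_right) (by omega))⟩
  exact (eq_of_subset_of_card_le (subset_inter hDX hDY) (by omega)).symm

theorem subset_union_of_card_inter_eq {X Y W : Finset α} {k : ℕ} (hXY : #(X ∩ Y) = k)
    (hWX : #(W ∩ X) = k) (hWY : #(W ∩ Y) = k) (hW : #W ≤ k + 1) (h : ¬X ∩ Y ⊆ W) :
    W ⊆ X ∪ Y := by
  have hsmall : #(W ∩ (X ∩ Y)) < k := hXY ▸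
    card_lt_card ⟨inter_subset_right, fun hsub => h (hsub.trans inter_subset_left)⟩
  have hsplit := card_union_add_card_inter (W ∩ X) (W ∩ Y)
  rw [← inter_union_distrib_left, ← inter_inter_distrib_left] at hsplit
  exact inter_eq_left.1 (eq_of_subset_of_card_le inter_subset_left (by omega))

theorem exists_subset_forall_of_pairwise_card_inter {F : Finset (Finset α)} {k : ℕ}
    (hcard : ∀ X ∈ F, #X = k + 1) (hinter : ∀ X ∈ F, ∀ Y ∈ F, X ≠ Y → #(X ∩ Y) = k)
    (hF : k + 2 < #F) : ∃ K, #K = k ∧ ∀ Z ∈ F, K ⊆ Z := by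
  obtain ⟨X, hX, Y, hY, hXY⟩ := one_lt_card.1 (by omega : 1 < #F)
  have hU : #(X ∪ Y) = k + 2 := by
    have := card_union_add_card_inter X Y
    rw [hcard X hX, hcard Y hY, hinter X hX Y hY hXY] at this
    omega
  obtain ⟨W, hW, hWU⟩ : ∃ W ∈ F, ¬W ⊆ X ∪ Y := by
    by_contra! h
    have := card_le_card fun W hW => mem_powersetCard.2 ⟨h W hW, hcard W hW⟩
    rw [card_powersetCard, hU, Nat.choose_succ_self_right] at this
    omega
  have hWX : W ≠ X := fun h => hWU (h ▸ subset_union_left)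
  have hWY : W ≠ Y := fun h => hWU (h ▸ subset_union_right)
  have hKW : X ∩ Y ⊆ W := by
    by_contra h
    exact hWU (subset_union_of_card_inter_eq (hinter X hX Y hY hXY) (hinter W hW X hX hWX)
      (hinter W hW Y hY hWY) (hcard W hW).le h)
  refine ⟨X ∩ Y, hinter X hX Y hY hXY, fun Z hZ => ?_⟩
  by_contra hKZ
  have hZW : Z ≠ W := fun h => hKZ (h ▸ hKW)
  have hZX : Z ≠ X := fun h => hKZ (h ▸ inter_subset_left)
  have hZY : Z ≠ Y := fun h => hKZ (h ▸ inter_subset_right)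
  -- `W` together with `X` (or `Y`) is another pair whose intersection contains `X ∩ Y`.
  have hZXW : Z ⊆ X ∪ W := subset_union_of_card_inter_eq (hinter X hX W hW hWX.symm)
    (hinter Z hZ X hX hZX) (hinter Z hZ W hW hZW) (hcard Z hZ).le
    fun h => hKZ ((subset_inter inter_subset_left hKW).trans h)
  have hZYW : Z ⊆ Y ∪ W := subset_union_of_card_inter_eq (hinter Y hY W hW hWY.symm)
    (hinter Z hZ Y hY hZY) (hinter Z hZ W hW hZW) (hcard Z hZ).le
    fun h => hKZ ((subset_inter inter_subset_right hKW).trans h)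
  have hZsubW : Z ⊆ W := by
    have := subset_inter hZXW hZYW
    rwa [← inter_union_distrib_right, union_eq_right.2 hKW] at this
  exact hZW (eq_of_subset_of_card_le hZsubW (by rw [hcard Z hZ, hcard W hW]))

end Finset

abbrev KneserVertex (n r : ℕ) := {s : Finset (Fin n) // #s = r}

namespace KneserCompl

variable {n r : ℕ}

theorem card_filter_disjoint (s : Finset (Fin n)) :
    #{Z : KneserVertex n r | Disjoint Z.1 s} = (n - #s).choose r := by
  have hcompl : n - #s = #sᶜ := by rw [card_compl, Fintype.card_fin]
  rw [hcompl, ← card_powersetCard,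
    ← card_map (Function.Embedding.subtype _)]
  congr 1
  ext t
  simp [mem_powersetCard, subset_compl_iff_disjoint_right, and_comm]

theorem card_filter_superset {D : Finset (Fin n)} (hD : #D ≤ r) :
    #{X : KneserVertex n r | D ⊆ X.1} = (n - #D).choose (r - #D) := by
  have hcompl : n - #D = #Dᶜ := by rw [card_compl, Fintype.card_fin]
  rw [hcompl, ← card_powersetCard]
  refine card_bij (fun X _ => X.1 \ D) ?_ ?_ ?_
  · intro X hX
    rw [mem_filter] at hX
    rw [mem_powersetCard, card_sdiff_of_subset hX.2, X.2]
    exact ⟨subset_compl_iff_disjoint_right.2 sdiff_disjoint, rfl⟩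
  · intro X hX Y hY hXY
    rw [mem_filter] at hX hY
    apply Subtype.ext
    rw [← sdiff_union_of_subset hX.2, ← sdiff_union_of_subset hY.2, hXY]
  · intro t ht
    rw [mem_powersetCard, subset_compl_iff_disjoint_right] at ht
    refine ⟨⟨t ∪ D, by rw [card_union_of_disjoint ht.1, ht.2]; omega⟩,
      mem_filter.2 ⟨mem_univ _, subset_union_right⟩, union_sdiff_cancel_right ht.1⟩

theorem disjoint_iff_ne_and_not_adj (hr : 0 < r) {X Y : KneserVertex n r} :
    Disjoint X.1 Y.1 ↔ X ≠ Y ∧ ¬(KneserCompl n r).Adj X Y := by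
  simp only [KneserCompl, not_and, not_nonempty_iff_eq_empty, ← disjoint_iff_inter_eq_empty]
  refine ⟨fun h => ⟨?_, fun _ => h⟩, fun h => h.2 h.1⟩
  rintro rfl
  rw [disjoint_self_iff_empty, ← card_eq_zero, X.2] at h
  omega

theorem eq_or_disjoint_of_not_adj {X Y : KneserVertex n r} (h : ¬(KneserCompl n r).Adj X Y) :
    X = Y ∨ Disjoint X.1 Y.1 := by
  simp only [KneserCompl, not_and, not_nonempty_iff_eq_empty, ← disjoint_iff_inter_eq_empty] at h
  tauto

variable {σ : Equiv.Perm (KneserVertex n r)}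

theorem disjoint_apply_iff (hσ : IsGraphAutomorphism (KneserCompl n r) σ) (hr : 0 < r)
    (X Y : KneserVertex n r) : Disjoint (σ X).1 (σ Y).1 ↔ Disjoint X.1 Y.1 := by
  rw [disjoint_iff_ne_and_not_adj hr, disjoint_iff_ne_and_not_adj hr, σ.injective.ne_iff, hσ]

theorem card_filter_disjoint_union_apply (hσ : IsGraphAutomorphism (KneserCompl n r) σ)
    (hr : 0 < r) (X Y : KneserVertex n r) :
    #{Z : KneserVertex n r | Disjoint Z.1 ((σ X).1 ∪ (σ Y).1)} =
      #{Z : KneserVertex n r | Disjoint Z.1 (X.1 ∪ Y.1)} :=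
  (card_equiv σ fun Z => by
    simp only [mem_filter, mem_univ, true_and, disjoint_union_right, disjoint_apply_iff hσ hr]).symm

theorem card_inter_apply (hσ : IsGraphAutomorphism (KneserCompl n r) σ) (hn : 2 * r + 1 ≤ n)
    {X Y : KneserVertex n r} (h : #(X.1 ∩ Y.1) + 1 = r) : #((σ X).1 ∩ (σ Y).1) + 1 = r := by
  have hr : 0 < r := by omega
  have hXY : X ≠ Y := by
    rintro rfl
    rw [inter_self, X.2] at h
    omega
  have hlt : #((σ X).1 ∩ (σ Y).1) < r := by
    have := card_lt_card ⟨inter_subset_left (s₁ := (σ X).1) (s₂ := (σ Y).1),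
      fun hsub => hXY (σ.injective (Subtype.ext (eq_of_subset_of_card_le
        (hsub.trans inter_subset_right) (by rw [(σ X).2, (σ Y).2]))))⟩
    rwa [(σ X).2] at this
  have hcount := card_filter_disjoint_union_apply hσ hr X Y
  rw [card_filter_disjoint, card_filter_disjoint] at hcount
  have hU := card_union_add_card_inter X.1 Y.1
  have hσU := card_union_add_card_inter (σ X).1 (σ Y).1
  rw [X.2, Y.2] at hU
  rw [(σ X).2, (σ Y).2] at hσU
  by_contra hne
  have := Nat.choose_lt_choose_of_lt (a := n - #((σ X).1 ∪ (σ Y).1))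
    (b := n - #(X.1 ∪ Y.1)) hr (by omega) (by omega)
  omega

theorem exists_card_eq_forall_subset_apply (hσ : IsGraphAutomorphism (KneserCompl n r) σ)
    (hn : 2 * r + 1 ≤ n) {D : Finset (Fin n)} (hD : #D + 1 = r) :
    ∃ K, #K = #D ∧ ∀ X : KneserVertex n r, D ⊆ X.1 → K ⊆ (σ X).1 := by
  obtain ⟨K, hK, hKsub⟩ : ∃ K, #K = #D ∧
      ∀ Z ∈ (univ.filter fun X : KneserVertex n r => D ⊆ X.1).image (fun X => (σ X).1), K ⊆ Z := by
    refine exists_subset_forall_of_pairwise_card_inter ?_ ?_ ?_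
    · simp only [mem_image]
      rintro _ ⟨X, -, rfl⟩
      rw [(σ X).2, hD]
    · simp only [mem_image, mem_filter, mem_univ, true_and]
      rintro _ ⟨X, hX, rfl⟩ _ ⟨Y, hY, rfl⟩ hne
      have hXY : X ≠ Y := by rintro rfl; exact hne rfl
      have := card_inter_apply hσ hn (X := X) (Y := Y) (by
        rw [inter_eq_of_card_eq_add_one hX hY (by omega) (by omega) (Subtype.val_injective.ne hXY)]
        exact hD)
      omega
    · rw [card_image_of_injective (f := fun X => (σ X).1) _
        (Subtype.val_injective.comp σ.injective),
        card_filter_superset (by omega), show r - #D = 1 by omega, Nat.choose_one_right]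
      omega
  exact ⟨K, hK, fun X hX => hKsub _ (mem_image_of_mem _ (mem_filter.2 ⟨mem_univ _, hX⟩))⟩

theorem eq_one_of_forall_eq_or_disjoint (hσ : IsGraphAutomorphism (KneserCompl n r) σ)
    (hr : 3 ≤ r) (hn : 2 * r + 1 ≤ n) (h : ∀ X, σ X = X ∨ Disjoint (σ X).1 X.1) : σ = 1 := by
  by_contra hσ1
  obtain ⟨A, hA⟩ : ∃ A, σ A ≠ A := by
    by_contra! h'
    exact hσ1 (Equiv.ext h')
  have hAdisj := (h A).resolve_left hA
  obtain ⟨D, hDA, hD⟩ := exists_subset_card_eq (show r - 1 ≤ #A.1 by omega)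
  obtain ⟨K, hK, hKsub⟩ := exists_card_eq_forall_subset_apply hσ hn (D := D) (by omega)
  have hKA : Disjoint K A.1 := hAdisj.mono_left (hKsub A hDA)
  obtain ⟨x, hx⟩ : K.Nonempty := card_pos.1 (by omega)
  have hxD : x ∉ D := fun hxD => disjoint_left.1 hKA hx (hDA hxD)
  set X : KneserVertex n r := ⟨insert x D, by rw [card_insert_of_notMem hxD]; omega⟩
  have hfix : σ X = X := (h X).resolve_right fun hdisj =>
    disjoint_left.1 hdisj (hKsub X (subset_insert _ _) hx) (mem_insert_self _ _)
  have hKx : K ⊆ {x} := by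
    intro y hy
    have hyX := hKsub X (subset_insert _ _) hy
    rw [hfix] at hyX
    rcases mem_insert.1 hyX with rfl | hyD
    · exact mem_singleton_self _
    · exact absurd (hDA hyD) (disjoint_left.1 hKA hy)
  have := card_le_card hKx
  rw [card_singleton] at this
  omega

theorem isDistinguishing (hr : 3 ≤ r) (hn : 2 * r + 1 ≤ n) {α : Type*}
    (C : (KneserCompl n r).Coloring α) : IsDistinguishing (KneserCompl n r) C :=
  fun _ hσ hC => eq_one_of_forall_eq_or_disjoint hσ hr hn fun X =>
    eq_or_disjoint_of_not_adj fun hadj => C.valid hadj (hC X)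

end KneserCompl

theorem distChromNum_eq_chromNum_of_forall_isDistinguishing {V : Type*} {G : SimpleGraph V}
    (h : ∀ m (C : G.Coloring (Fin m)), IsDistinguishing G C) : distChromNum G = chromNum G := by
  unfold distChromNum chromNum
  congr 1
  ext m
  exact ⟨fun ⟨C, _⟩ => ⟨C⟩, fun ⟨C⟩ => ⟨C, h m C⟩⟩

/-- For `r ≥ 3` and `n ≥ 2r + 1`, every proper coloring of the complement of the
Kneser graph `K(n,r)` is distinguishing; consequently its distinguishing chromatic
number equals its chromatic number. -/
theorem stmt14 (n r : ℕ) (hr : 3 ≤ r) (hn : 2 * r + 1 ≤ n) :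
    (∀ (α : Type*) (C : (KneserCompl n r).Coloring α),
      IsDistinguishing (KneserCompl n r) C) ∧
    distChromNum (KneserCompl n r) = chromNum (KneserCompl n r) :=
  ⟨fun _ => KneserCompl.isDistinguishing hr hn,
    distChromNum_eq_chromNum_of_forall_isDistinguishing fun _ => KneserCompl.isDistinguishing hr hn⟩
end

section
/- Let r ≥ 3 and n ≥ 2r. For every proper coloring of the complement of the Kneser graph K(n,r) and every permutation σ of [n] such that the induced map A ↦ σ(A) on r-element subsets maps every color class to itself, one has σ(A) = A for every r-element subset A of [n]. -/
/-- The map induced on `r`-element subsets of `[n]` by a permutation `σ` of `[n]`. -/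
def inducedSubsetMap (n r : ℕ) (σ : Equiv.Perm (Fin n))
    (A : {s : Finset (Fin n) // s.card = r}) : {s : Finset (Fin n) // s.card = r} :=
  ⟨A.1.image σ, by rw [Finset.card_image_of_injective _ σ.injective]; exact A.2⟩

/-!
An `r`-set `A` and its image `σ(A)` share a colour, so they are not adjacent: either
`σ(A) = A` or `σ(A)` is disjoint from `A`. Now suppose `σ x = y ≠ x` and pick `z ∉ {x, y}`.
An `r`-set `S ⊇ {x, z, σ z}` avoiding `y` exists since `r ≥ 3` and `r < n`; it is not fixed
(`y ∈ σ(S) \ S`), yet `σ z ∈ σ(S) ∩ S`, a contradiction. Hence `σ = 1`.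
-/

open Finset

theorem KneserCompl.image_eq_or_disjoint {n r : ℕ} {α : Type*}
    (C : (KneserCompl n r).Coloring α) {σ : Equiv.Perm (Fin n)}
    (hfix : ∀ A, C (inducedSubsetMap n r σ A) = C A) (A : {s : Finset (Fin n) // s.card = r}) :
    A.1.image σ = A.1 ∨ Disjoint (A.1.image σ) A.1 := by
  by_contra! h
  refine C.valid ⟨fun he => h.1 (congrArg Subtype.val he), ?_⟩ (hfix A)
  exact not_disjoint_iff_nonempty_inter.mp h.2

theorem Equiv.Perm.eq_one_of_image_eq_or_disjoint {ι : Type*} [Fintype ι] [DecidableEq ι]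
    {σ : Equiv.Perm ι} {r : ℕ} (hr : 3 ≤ r) (hrι : r < Fintype.card ι)
    (h : ∀ S : Finset ι, S.card = r → S.image σ = S ∨ _root_.Disjoint (S.image σ) S) : σ = 1 := by
  ext x
  by_contra hx
  rw [Equiv.Perm.one_apply] at hx
  obtain ⟨z, hz⟩ : ({x, σ x}ᶜ : Finset ι).Nonempty := by
    rw [← card_pos, card_compl]
    have := card_le_two (a := x) (b := σ x)
    omega
  simp only [mem_compl, mem_insert, mem_singleton, not_or] at hz
  have hσz : σ z ≠ σ x := σ.injective.ne hz.1
  obtain ⟨S, hxzS, hSy, hS⟩ :=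
    exists_subsuperset_card_eq (s := {x, z, σ z}) (t := {σ x}ᶜ) (n := r)
      (by simp [subset_iff, Ne.symm hx, hz.2, hσz]) (card_le_three.trans hr)
      (by rw [card_compl, card_singleton]; omega)
  have hyS : σ x ∉ S := fun hy => by simpa using hSy hy
  have hxS : x ∈ S := hxzS (by simp)
  have hzS : z ∈ S := hxzS (by simp)
  have hσzS : σ z ∈ S := hxzS (by simp)
  rcases h S hS with hfixS | hdisj
  · exact hyS (hfixS ▸ mem_image_of_mem σ hxS)
  · exact disjoint_left.mp hdisj (mem_image_of_mem σ hzS) hσzS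

/-- For `r ≥ 3` and `n ≥ 2r`: given any proper coloring of the complement of the
Kneser graph `K(n,r)` and any permutation `σ` of `[n]` whose induced map on
`r`-element subsets maps every color class to itself, `σ(A) = A` for every
`r`-element subset `A` of `[n]`. -/
theorem stmt15 (n r : ℕ) (hr : 3 ≤ r) (hn : 2 * r ≤ n)
    (α : Type*) (C : (KneserCompl n r).Coloring α) (σ : Equiv.Perm (Fin n))
    (hfix : ∀ A : {s : Finset (Fin n) // s.card = r}, C (inducedSubsetMap n r σ A) = C A) :
    ∀ A : Finset (Fin n), A.card = r → A.image σ = A := by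
  have hσ : σ = 1 :=
    Equiv.Perm.eq_one_of_image_eq_or_disjoint hr (by rw [Fintype.card_fin]; omega)
      fun S hS => KneserCompl.image_eq_or_disjoint C hfix ⟨S, hS⟩
  intro A _
  simp [hσ]
end

section
/- Let q ≥ 5 be a prime and let r, s ≥ 2 be integers. Then the distinguishing chromatic number of the graph LG_q ⊗ K_{r,s} equals r + s + 1. -/
/-- The `d`-dimensional subspaces of `F³`. -/
abbrev SubspaceDim (F : Type*) [Field F] (d : ℕ) :=
  {W : Submodule F (Fin 3 → F) // Module.finrank F W = d}

/-- The adjacency relation of the graph `LG_q ⊗ K_{r,s}`: a point-copy `(p, i)` is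
adjacent to a line-copy `(l, j)` iff `p ⊆ l`; there are no other adjacencies. -/
def LeviTensorAdj (F : Type*) [Field F] (r s : ℕ) :
    (SubspaceDim F 1 × Fin r) ⊕ (SubspaceDim F 2 × Fin s) →
      (SubspaceDim F 1 × Fin r) ⊕ (SubspaceDim F 2 × Fin s) → Prop
  | Sum.inl p, Sum.inr l => p.1.1 ≤ l.1.1
  | Sum.inr l, Sum.inl p => p.1.1 ≤ l.1.1
  | Sum.inl _, Sum.inl _ => False
  | Sum.inr _, Sum.inr _ => False

/-- The graph `LG_q ⊗ K_{r,s}` on vertex set `(P × [r]) ⊔ (L × [s])`, where `P` is the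
set of points (1-dimensional subspaces) and `L` the set of lines (2-dimensional
subspaces) of `F³`. -/
def LeviTensor (F : Type*) [Field F] (r s : ℕ) :
    SimpleGraph ((SubspaceDim F 1 × Fin r) ⊕ (SubspaceDim F 2 × Fin s)) where
  Adj := LeviTensorAdj F r s
  symm := by
    constructor
    rintro (p | l) (p' | l') h
    · exact h.elim
    · exact h
    · exact h
    · exact h.elim
  loopless := by
    constructor
    rintro (p | l) h
    · exact h.elim
    · exact h.elim

/-!
Upper bound: colour copy `i` of a point by `i` and copy `j` of a line by `r + j`, except that
copy `0` of every point of a set `S` gets one extra colour. A colour-preserving automorphism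
keeps every copy index, so it induces collineations of `PG(2, q)` preserving `S`. Take
`A, B, C, D, E = ⟨e₀⟩, ⟨e₁⟩, ⟨e₂⟩, ⟨e₀ + e₁ + e₂⟩, ⟨e₀ + e₂⟩` and
`S = (AB ∖ {B}) ∪ (AC ∖ {C, E}) ∪ {D}`. Since `q ≥ 5`, every line has at least six points, so
counting the points outside `S` on each line shows that such a collineation fixes the frame
`A, B, C, D`; over a prime field a collineation fixing a frame is the identity (intersecting
lines through fixed points reaches every point).

Lower bound: the copies of a point (or of a line) are twins, so they get distinct colours. With
only `r + s` colours, the colours of a point and of an incident line are complementary, so all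
points carry the same `r` colours and all lines the same `s` colours; any nontrivial collineation
then lifts to a colour-preserving automorphism.
-/

open Module Submodule Matrix

section Distinguishing

variable {V : Type*} (G : SimpleGraph V)

lemma isGraphAutomorphism_swap [DecidableEq V] {u v : V} (h : ∀ w, G.Adj u w ↔ G.Adj v w) :
    IsGraphAutomorphism G (Equiv.swap u v) := by
  have key : ∀ a b, G.Adj (Equiv.swap u v a) b ↔ G.Adj a b := by
    intro a b
    rw [Equiv.swap_apply_def]
    split_ifs with hu hv
    · rw [hu, h]
    · rw [hv, h]
    · rfl
  intro a b
  rw [key, G.adj_comm, key, G.adj_comm]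

variable {G}

lemma IsDistinguishing.eq_of_color_eq {α : Type*} {C : G.Coloring α} (hC : IsDistinguishing G C)
    {u v : V} (hc : C u = C v) (h : ∀ w, G.Adj u w ↔ G.Adj v w) : u = v := by
  classical
  have hσ := hC _ (isGraphAutomorphism_swap G h) fun w => by
    rw [Equiv.swap_apply_def]
    split_ifs with hu hv
    · rw [hu, hc]
    · rw [hv, hc]
    · rfl
  simpa using (Equiv.ext_iff.1 hσ u).symm

lemma IsDistinguishing.exists_fin {α : Type*} [Fintype α] {C : G.Coloring α}
    (hC : IsDistinguishing G C) :
    ∃ C' : G.Coloring (Fin (Fintype.card α)), IsDistinguishing G C' := by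
  let e := Fintype.equivFin α
  exact ⟨SimpleGraph.Coloring.mk (e ∘ C) fun h => by simpa using C.valid h,
    fun σ hσ hcol => hC σ hσ fun v => e.injective (hcol v)⟩

lemma distChromNum_eq_card {α : Type*} [Fintype α] {C : G.Coloring α} (hC : IsDistinguishing G C)
    (hle : ∀ n (C' : G.Coloring (Fin n)), IsDistinguishing G C' → Fintype.card α ≤ n) :
    distChromNum G = Fintype.card α :=
  le_antisymm (Nat.sInf_le hC.exists_fin)
    (le_csInf ⟨_, hC.exists_fin⟩ fun n ⟨C', hC'⟩ => hle n C' hC')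

end Distinguishing

lemma natCast_surjective_of_card_eq_prime {F : Type*} [Ring F] [Fintype F] {q : ℕ}
    (hq : q.Prime) (hF : Fintype.card F = q) : Function.Surjective (Nat.cast : ℕ → F) := by
  have := Fact.mk hq
  let e := ZMod.ringEquivOfPrime F hq hF
  intro x
  obtain ⟨n, hn⟩ := ZMod.natCast_zmod_surjective (e.symm x)
  exact ⟨n, by rw [← map_natCast e, hn, e.apply_symm_apply]⟩

noncomputable def SubspaceDim.map {F : Type*} [Field F] (e : (Fin 3 → F) ≃ₗ[F] (Fin 3 → F))
    (d : ℕ) : SubspaceDim F d ≃ SubspaceDim F d :=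
  (Submodule.orderIsoMapComap e).toEquiv.subtypeEquiv fun W => by
    rw [RelIso.coe_fn_toEquiv, Submodule.orderIsoMapComap_apply, LinearEquiv.finrank_map_eq]

namespace ProjPlane

abbrev Point (F : Type*) [Field F] := SubspaceDim F 1

abbrev Line (F : Type*) [Field F] := SubspaceDim F 2

variable {F : Type*} [Field F]

section Synthetic

lemma Point.inf_eq_bot {p q : Point F} (h : p ≠ q) : p.1 ⊓ q.1 = ⊥ := by
  by_contra hb
  have h1 : 1 ≤ finrank F ↥(p.1 ⊓ q.1) := by
    rwa [Nat.one_le_iff_ne_zero, ne_eq, Submodule.finrank_eq_zero]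
  have hp : p.1 ⊓ q.1 = p.1 := eq_of_le_of_finrank_le inf_le_left (by omega)
  have hq : p.1 ⊓ q.1 = q.1 := eq_of_le_of_finrank_le inf_le_right (by omega)
  exact h (Subtype.ext (hp ▸ hq))

lemma Point.finrank_sup {p q : Point F} (h : p ≠ q) : finrank F ↥(p.1 ⊔ q.1) = 2 := by
  have := Submodule.finrank_sup_add_finrank_inf_eq p.1 q.1
  rw [Point.inf_eq_bot h, finrank_bot, p.2, q.2] at this
  omega

lemma Line.eq_sup {l : Line F} {p q : Point F} (h : p ≠ q) (hp : p.1 ≤ l.1) (hq : q.1 ≤ l.1) :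
    l.1 = p.1 ⊔ q.1 :=
  (eq_of_le_of_finrank_le (sup_le hp hq) (by rw [Point.finrank_sup h, l.2])).symm

lemma Line.eq_of_le {l l' : Line F} {p q : Point F} (h : p ≠ q) (hp : p.1 ≤ l.1) (hq : q.1 ≤ l.1)
    (hp' : p.1 ≤ l'.1) (hq' : q.1 ≤ l'.1) : l = l' :=
  Subtype.ext ((Line.eq_sup h hp hq).trans (Line.eq_sup h hp' hq').symm)

lemma Point.eq_of_le {p q : Point F} {l l' : Line F} (h : l ≠ l') (hp : p.1 ≤ l.1)
    (hp' : p.1 ≤ l'.1) (hq : q.1 ≤ l.1) (hq' : q.1 ≤ l'.1) : p = q :=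
  by_contra fun hpq => h (Line.eq_of_le hpq hp hq hp' hq')

end Synthetic

section Coordinates

def point (v : Fin 3 → F) (hv : v ≠ 0) : Point F := ⟨span F {v}, finrank_span_singleton hv⟩

lemma point_le_iff {v : Fin 3 → F} {hv : v ≠ 0} {W : Submodule F (Fin 3 → F)} :
    (point v hv).1 ≤ W ↔ v ∈ W :=
  span_singleton_le_iff_mem _ _

lemma Point.exists_eq_span_singleton (p : Point F) : ∃ v, v ≠ 0 ∧ p.1 = span F {v} := by
  obtain ⟨v, hvp, hv⟩ := exists_mem_ne_zero_of_ne_bot (p := p.1) fun h => by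
    simpa [Submodule.finrank_eq_zero.2 h] using p.2
  refine ⟨v, hv, (eq_of_le_of_finrank_eq ((span_singleton_le_iff_mem _ _).2 hvp) ?_).symm⟩
  rw [p.2, finrank_span_singleton hv]

lemma ne_zero_of_cross_ne_zero {u w : Fin 3 → F} (h : u ⨯₃ w ≠ 0) : u ≠ 0 ∧ w ≠ 0 := by
  constructor <;> rintro rfl <;> simp at h

lemma point_ne_point {x y : Fin 3 → F} {hx : x ≠ 0} {hy : y ≠ 0} (h : x ⨯₃ y ≠ 0) :
    point x hx ≠ point y hy := by
  intro hxy
  obtain ⟨c, rfl⟩ := mem_span_singleton.mp (point_le_iff.mp (congrArg Subtype.val hxy.symm).le)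
  simp [cross_self] at h

lemma mem_span_pair_iff_dotProduct_cross {u w x : Fin 3 → F} (h : u ⨯₃ w ≠ 0) :
    x ∈ span F {u, w} ↔ x ⬝ᵥ u ⨯₃ w = 0 := by
  constructor
  · intro hx
    obtain ⟨a, b, rfl⟩ := mem_span_pair.mp hx
    simp [add_dotProduct, dot_self_cross, dot_cross_self]
  · rw [crossProduct_ne_zero_iff_linearIndependent] at h
    contrapose!
    intro hx
    have hind : LinearIndependent F ![x, u, w] :=
      linearIndependent_finCons.mpr ⟨h, range_cons_cons_empty u w ![] ▸ hx⟩
    rw [triple_product_eq_det, ← isUnit_iff_ne_zero]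
    exact (isUnit_iff_isUnit_det _).mp (linearIndependent_rows_iff_isUnit.mp hind)

lemma finrank_span_pair {u w : Fin 3 → F} (h : u ⨯₃ w ≠ 0) : finrank F ↥(span F {u, w}) = 2 := by
  rw [crossProduct_ne_zero_iff_linearIndependent] at h
  rw [← range_cons_cons_empty u w ![]]
  exact finrank_span_eq_card h

def line (u w : Fin 3 → F) (h : u ⨯₃ w ≠ 0) : Line F := ⟨span F {u, w}, finrank_span_pair h⟩

lemma point_le_line_iff {x u w : Fin 3 → F} {hx : x ≠ 0} {h : u ⨯₃ w ≠ 0} :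
    (point x hx).1 ≤ (line u w h).1 ↔ x ⬝ᵥ u ⨯₃ w = 0 :=
  point_le_iff.trans (mem_span_pair_iff_dotProduct_cross h)

lemma Line.exists_eq_line (l : Line F) : ∃ u w h, l = line u w h := by
  obtain ⟨u, hul, hu⟩ := exists_mem_ne_zero_of_ne_bot (p := l.1) fun h => by
    simpa [Submodule.finrank_eq_zero.2 h] using l.2
  have hlt : span F {u} < l.1 := lt_of_le_of_ne ((span_singleton_le_iff_mem _ _).2 hul)
    fun h => by
      have := finrank_span_singleton (K := F) hu
      rw [h, l.2] at this
      omega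
  obtain ⟨w, hwl, hw⟩ := SetLike.exists_of_lt hlt
  have hind : LinearIndependent F ![u, w] :=
    (LinearIndependent.pair_iff' hu).2 fun a ha => hw (mem_span_singleton.2 ⟨a, ha⟩)
  have h := crossProduct_ne_zero_iff_linearIndependent.2 hind
  refine ⟨u, w, h, Subtype.ext (eq_of_le_of_finrank_eq ?_ ?_).symm⟩
  · exact span_le.2 (Set.insert_subset hul (Set.singleton_subset_iff.2 hwl))
  · exact (finrank_span_pair h).trans l.2.symm

lemma Line.exists_point (l : Line F) : ∃ p : Point F, p.1 ≤ l.1 := by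
  obtain ⟨u, w, h, rfl⟩ := l.exists_eq_line
  exact ⟨point u (ne_zero_of_cross_ne_zero h).1, point_le_line_iff.2 (dot_self_cross u w)⟩

lemma Point.eq_of_forall_le_iff {p q : Point F} (h : ∀ l : Line F, p.1 ≤ l.1 ↔ q.1 ≤ l.1) :
    p = q := by
  by_contra hpq
  have hne : p.1 ⊔ q.1 ≠ ⊤ := fun htop => by
    have := Point.finrank_sup hpq
    rw [htop, finrank_top, finrank_fin_fun] at this
    omega
  obtain ⟨v, -, hv⟩ := SetLike.exists_of_lt (lt_top_iff_ne_top.2 hne)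
  have hv0 : v ≠ 0 := by rintro rfl; exact hv (zero_mem _)
  have hpv : p ≠ point v hv0 := by
    rintro rfl
    exact hv (mem_sup_left (mem_span_singleton_self v))
  let m : Line F := ⟨p.1 ⊔ (point v hv0).1, Point.finrank_sup hpv⟩
  let l : Line F := ⟨p.1 ⊔ q.1, Point.finrank_sup hpq⟩
  have hml : m = l := Line.eq_of_le hpq le_sup_left ((h m).1 le_sup_left) le_sup_left le_sup_right
  have hvl : (point v hv0).1 ≤ l.1 := hml ▸ le_sup_right
  exact hv (point_le_iff.1 hvl)

lemma Line.eq_of_forall_le_iff {l l' : Line F} (h : ∀ p : Point F, p.1 ≤ l.1 ↔ p.1 ≤ l'.1) :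
    l = l' := by
  by_contra hne
  have hle : ¬ l.1 ≤ l'.1 := fun hle =>
    hne (Subtype.ext (eq_of_le_of_finrank_eq hle (by rw [l.2, l'.2])))
  obtain ⟨v, hvl, hvl'⟩ := SetLike.not_le_iff_exists.mp hle
  have hv0 : v ≠ 0 := by rintro rfl; exact hvl' (zero_mem _)
  exact hvl' (point_le_iff.1 ((h (point v hv0)).1 (point_le_iff.2 hvl)))

lemma Line.card_add_one_le_encard_points (l : Line F) :
    ENat.card F + 1 ≤ {p : Point F | p.1 ≤ l.1}.encard := by
  obtain ⟨a, b, h, rfl⟩ := l.exists_eq_line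
  have hb := (ne_zero_of_cross_ne_zero h).2
  have hcross : ∀ t : F, (a + t • b) ⨯₃ b = a ⨯₃ b := by simp [cross_self]
  have ht : ∀ t : F, a + t • b ≠ 0 := fun t =>
    (ne_zero_of_cross_ne_zero ((hcross t).symm ▸ h)).1
  let f : F → Point F := fun t => point (a + t • b) (ht t)
  have hf : Function.Injective f := by
    intro t t' htt'
    by_contra hne
    refine point_ne_point ?_ htt'
    have : (a + t • b) ⨯₃ (a + t' • b) = (t' - t) • a ⨯₃ b := by
      simp only [map_add, map_smul, LinearMap.add_apply, LinearMap.smul_apply, cross_self,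
        smul_zero, add_zero, zero_add, ← cross_anticomm b a]
      module
    rw [this]
    exact smul_ne_zero (sub_ne_zero.2 (Ne.symm hne)) h
  have hbf : point b hb ∉ Set.range f := by
    rintro ⟨t, htb⟩
    exact point_ne_point (by rw [hcross]; exact h) htb
  calc ENat.card F + 1 = (insert (point b hb) (Set.range f)).encard := by
        rw [Set.encard_insert_of_notMem hbf, ← Set.image_univ, hf.encard_image, Set.encard_univ]
    _ ≤ _ := by
        refine Set.encard_le_encard ?_
        rintro _ (rfl | ⟨t, rfl⟩) <;>
          simp [f, point_le_line_iff, add_dotProduct, dot_self_cross, dot_cross_self]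

end Coordinates

section Collineations

def IsCollineation (g : Point F → Point F) (h : Line F → Line F) : Prop :=
  ∀ p l, (g p).1 ≤ (h l).1 ↔ p.1 ≤ l.1

def Fixes (g : Point F → Point F) (v : Fin 3 → F) : Prop :=
  ∀ p : Point F, p.1 = span F {v} → g p = p

lemma fixes_of_apply_point_eq {g : Point F → Point F} {v : Fin 3 → F} {hv : v ≠ 0}
    (h : g (point v hv) = point v hv) : Fixes g v := by
  rintro p hp
  obtain rfl : p = point v hv := Subtype.ext hp
  exact h

lemma apply_eq_self_of_fixes_charts {g : Point F → Point F} (h001 : Fixes g ![0, 0, 1])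
    (h01 : ∀ t : F, Fixes g ![0, 1, t]) (h1 : ∀ b c : F, Fixes g ![1, b, c]) (p : Point F) :
    g p = p := by
  obtain ⟨v, hv, hp⟩ := p.exists_eq_span_singleton
  have of_smul : ∀ (c : F) (w : Fin 3 → F), c ≠ 0 → v = c • w → Fixes g w → g p = p :=
    fun c w hc hvw hw => hw p (by rw [hp, hvw, span_singleton_smul_eq (IsUnit.mk0 c hc)])
  by_cases h0 : v 0 = 0
  · by_cases h1 : v 1 = 0
    · have h2 : v 2 ≠ 0 := fun h2 => hv (by ext i; fin_cases i <;> assumption)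
      exact of_smul (v 2) _ h2 (by ext i; fin_cases i <;> simp [h0, h1, cons_val_two]) h001
    · exact of_smul (v 1) _ h1 (by ext i; fin_cases i <;> simp [h0, cons_val_two]; field_simp)
        (h01 (v 2 / v 1))
  · exact of_smul (v 0) _ h0 (by ext i; fin_cases i <;> simp [cons_val_two] <;> field_simp)
      (h1 (v 1 / v 0) (v 2 / v 0))

lemma isCollineation_map (e : (Fin 3 → F) ≃ₗ[F] (Fin 3 → F)) :
    IsCollineation (SubspaceDim.map e 1) (SubspaceDim.map e 2) :=
  fun _ _ => (Submodule.orderIsoMapComap e).le_iff_le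

namespace IsCollineation

variable {g : Point F → Point F} {h : Line F → Line F}

lemma injective (hc : IsCollineation g h) : Function.Injective g := fun p q hpq =>
  Point.eq_of_forall_le_iff fun l => by rw [← hc p l, ← hc q l, hpq]

lemma apply_line_eq_self (hc : IsCollineation g h) {p q : Point F} {l : Line F} (hpq : p ≠ q)
    (hp : g p = p) (hq : g q = q) (hpl : p.1 ≤ l.1) (hql : q.1 ≤ l.1) : h l = l :=
  Line.eq_of_le hpq (hp ▸ (hc p l).2 hpl) (hq ▸ (hc q l).2 hql) hpl hql

lemma apply_point_eq_self (hc : IsCollineation g h) {p : Point F} {l l' : Line F} (hll' : l ≠ l')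
    (hl : h l = l) (hl' : h l' = l') (hp : p.1 ≤ l.1) (hp' : p.1 ≤ l'.1) : g p = p :=
  Point.eq_of_le hll' (hl ▸ (hc p l).2 hp) (hl' ▸ (hc p l').2 hp') hp hp'

lemma apply_line_eq_self_of_fixes (hc : IsCollineation g h) {u w : Fin 3 → F}
    (huw : u ⨯₃ w ≠ 0) (hu : Fixes g u) (hw : Fixes g w) : h (line u w huw) = line u w huw := by
  obtain ⟨hu0, hw0⟩ := ne_zero_of_cross_ne_zero huw
  exact hc.apply_line_eq_self (point_ne_point huw) (hu (point u hu0) rfl) (hw (point w hw0) rfl)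
    (point_le_line_iff.2 (dot_self_cross u w)) (point_le_line_iff.2 (dot_cross_self u w))

lemma fixes_of_mem_inter (hc : IsCollineation g h) {u₁ u₂ u₃ u₄ x : Fin 3 → F}
    (f₁ : Fixes g u₁) (f₂ : Fixes g u₂) (f₃ : Fixes g u₃) (f₄ : Fixes g u₄)
    (h₁₂ : u₁ ⨯₃ u₂ ≠ 0) (h₃₄ : u₃ ⨯₃ u₄ ≠ 0) (hne : (u₁ ⨯₃ u₂) ⨯₃ (u₃ ⨯₃ u₄) ≠ 0)
    (hx₁₂ : x ⬝ᵥ u₁ ⨯₃ u₂ = 0) (hx₃₄ : x ⬝ᵥ u₃ ⨯₃ u₄ = 0) : Fixes g x := by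
  intro p hp
  have hx : x ≠ 0 := by
    rintro rfl
    have := p.2
    rw [hp, span_singleton_eq_bot.2 rfl, finrank_bot] at this
    omega
  obtain rfl : p = point x hx := Subtype.ext hp
  refine hc.apply_point_eq_self ?_ (hc.apply_line_eq_self_of_fixes h₁₂ f₁ f₂)
    (hc.apply_line_eq_self_of_fixes h₃₄ f₃ f₄) (point_le_line_iff.2 hx₁₂) (point_le_line_iff.2 hx₃₄)
  intro hl
  have hle : (line u₃ u₄ h₃₄).1 ≤ (line u₁ u₂ h₁₂).1 := hl ▸ le_rfl
  have hu : ∀ u ∈ ({u₃, u₄} : Set (Fin 3 → F)), u ⬝ᵥ u₁ ⨯₃ u₂ = 0 := fun u hu =>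
    (mem_span_pair_iff_dotProduct_cross h₁₂).1 (hle (subset_span hu))
  apply hne
  rw [cross_cross_eq_smul_sub_smul', dotProduct_comm, hu u₄ (by simp), hu u₃ (by simp)]
  simp

theorem eq_self_of_fixes_frame (hc : IsCollineation g h)
    (hF : Function.Surjective (Nat.cast : ℕ → F))
    (hA : Fixes g ![1, 0, 0]) (hB : Fixes g ![0, 1, 0]) (hC : Fixes g ![0, 0, 1])
    (hD : Fixes g ![1, 1, 1]) (p : Point F) : g p = p := by
  have hE : Fixes g ![0, 1, 1] := by
    refine hc.fixes_of_mem_inter hB hC hA hD ?_ ?_ ?_ ?_ ?_ <;>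
      norm_num [cross_apply, vec3_dotProduct, cons_val_two]
  have h10 : ∀ t : F, Fixes g ![1, 1, t] → Fixes g ![1, 0, t] := fun t ht => by
    refine hc.fixes_of_mem_inter hB ht hA hC ?_ ?_ ?_ ?_ ?_ <;>
      norm_num [cross_apply, vec3_dotProduct, cons_val_two]
  have h11 : ∀ t : F, Fixes g ![1, 0, t] → Fixes g ![1, 1, t + 1] := fun t ht => by
    refine hc.fixes_of_mem_inter ht hE hC hD ?_ ?_ ?_ ?_ ?_ <;>
      norm_num [cross_apply, vec3_dotProduct, cons_val_two]
  -- the only place where the field has to be prime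
  have fam11 : ∀ t : F, Fixes g ![1, 1, t] := by
    have : ∀ n : ℕ, Fixes g ![1, 1, (n : F)] := by
      intro n
      induction n with
      | zero =>
        refine hc.fixes_of_mem_inter hA hB hC hD ?_ ?_ ?_ ?_ ?_ <;>
          norm_num [cross_apply, vec3_dotProduct, cons_val_two]
      | succ n ih => simpa using h11 _ (h10 _ ih)
    intro t
    obtain ⟨n, rfl⟩ := hF t
    exact this n
  have fam10 : ∀ t : F, Fixes g ![1, 0, t] := fun t => h10 t (fam11 t)
  have fam1b0 : ∀ b : F, Fixes g ![1, b, 0] := fun b => by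
    refine hc.fixes_of_mem_inter hA hB (fam10 (-b)) hE ?_ ?_ ?_ ?_ ?_ <;>
      norm_num [cross_apply, vec3_dotProduct, cons_val_two]
  refine apply_eq_self_of_fixes_charts hC (fun t => ?_) (fun b c => ?_) p
  · refine hc.fixes_of_mem_inter hA (fam11 t) hB hC ?_ ?_ ?_ ?_ ?_ <;>
      norm_num [cross_apply, vec3_dotProduct, cons_val_two]
  · refine hc.fixes_of_mem_inter hB (fam10 c) hC (fam1b0 b) ?_ ?_ ?_ ?_ ?_ <;>
      norm_num [cross_apply, vec3_dotProduct, cons_val_two]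

end IsCollineation

end Collineations

section Rigidity

def pointsOutside (S : Set (Point F)) (l : Line F) : Set (Point F) := {p | p.1 ≤ l.1 ∧ p ∉ S}

def IsRigid (S : Set (Point F)) : Prop :=
  ∀ g h, IsCollineation g h → Function.Bijective g → (∀ p, g p ∈ S ↔ p ∈ S) → ∀ p, g p = p

namespace IsCollineation

variable {g : Point F → Point F} {h : Line F → Line F}

lemma image_pointsOutside (hc : IsCollineation g h) (hg : Function.Bijective g)
    {S : Set (Point F)} (hS : ∀ p, g p ∈ S ↔ p ∈ S) (l : Line F) :
    g '' pointsOutside S l = pointsOutside S (h l) := by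
  ext q
  constructor
  · rintro ⟨p, ⟨hpl, hpS⟩, rfl⟩
    exact ⟨(hc p l).2 hpl, (hS p).not.2 hpS⟩
  · rintro ⟨hql, hqS⟩
    obtain ⟨p, rfl⟩ := hg.2 q
    exact ⟨p, ⟨(hc p l).1 hql, (hS p).not.1 hqS⟩, rfl⟩

lemma encard_pointsOutside_apply (hc : IsCollineation g h) (hg : Function.Bijective g)
    {S : Set (Point F)} (hS : ∀ p, g p ∈ S ↔ p ∈ S) (l : Line F) :
    (pointsOutside S (h l)).encard = (pointsOutside S l).encard := by
  rw [← hc.image_pointsOutside hg hS, hg.1.encard_image]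

end IsCollineation

variable (F)

def ptA : Point F := point ![1, 0, 0] (by simp)
def ptB : Point F := point ![0, 1, 0] (by simp)
def ptC : Point F := point ![0, 0, 1] (by simp)
def ptD : Point F := point ![1, 1, 1] (by simp)
def ptE : Point F := point ![1, 0, 1] (by simp)

def lineAB : Line F := line ![1, 0, 0] ![0, 1, 0] (by norm_num [cross_apply, cons_val_two])
def lineAC : Line F := line ![1, 0, 0] ![0, 0, 1] (by norm_num [cross_apply, cons_val_two])
def lineBD : Line F := line ![0, 1, 0] ![1, 1, 1] (by norm_num [cross_apply, cons_val_two])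

/-- `lineAB` and `lineAC` are the only lines with one, resp. two, points outside this set. -/
def rigidSet : Set (Point F) :=
  {p | (p.1 ≤ (lineAB F).1 ∧ p ≠ ptB F) ∨ (p.1 ≤ (lineAC F).1 ∧ p ≠ ptC F ∧ p ≠ ptE F) ∨
    p = ptD F}

lemma ptA_le_lineAB : (ptA F).1 ≤ (lineAB F).1 :=
  point_le_line_iff.2 (by norm_num [cross_apply, vec3_dotProduct, cons_val_two])
lemma ptA_le_lineAC : (ptA F).1 ≤ (lineAC F).1 :=
  point_le_line_iff.2 (by norm_num [cross_apply, vec3_dotProduct, cons_val_two])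
lemma ptB_le_lineAB : (ptB F).1 ≤ (lineAB F).1 :=
  point_le_line_iff.2 (by norm_num [cross_apply, vec3_dotProduct, cons_val_two])
lemma ptB_le_lineBD : (ptB F).1 ≤ (lineBD F).1 :=
  point_le_line_iff.2 (by norm_num [cross_apply, vec3_dotProduct, cons_val_two])
lemma ptC_le_lineAC : (ptC F).1 ≤ (lineAC F).1 :=
  point_le_line_iff.2 (by norm_num [cross_apply, vec3_dotProduct, cons_val_two])
lemma ptD_le_lineBD : (ptD F).1 ≤ (lineBD F).1 :=
  point_le_line_iff.2 (by norm_num [cross_apply, vec3_dotProduct, cons_val_two])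
lemma ptE_le_lineAC : (ptE F).1 ≤ (lineAC F).1 :=
  point_le_line_iff.2 (by norm_num [cross_apply, vec3_dotProduct, cons_val_two])
lemma ptE_le_lineBD : (ptE F).1 ≤ (lineBD F).1 :=
  point_le_line_iff.2 (by norm_num [cross_apply, vec3_dotProduct, cons_val_two])

lemma ptB_not_le_lineAC : ¬ (ptB F).1 ≤ (lineAC F).1 :=
  point_le_line_iff.not.2 (by norm_num [cross_apply, vec3_dotProduct, cons_val_two])
lemma ptC_not_le_lineAB : ¬ (ptC F).1 ≤ (lineAB F).1 :=
  point_le_line_iff.not.2 (by norm_num [cross_apply, vec3_dotProduct, cons_val_two])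
lemma ptD_not_le_lineAB : ¬ (ptD F).1 ≤ (lineAB F).1 :=
  point_le_line_iff.not.2 (by norm_num [cross_apply, vec3_dotProduct, cons_val_two])
lemma ptD_not_le_lineAC : ¬ (ptD F).1 ≤ (lineAC F).1 :=
  point_le_line_iff.not.2 (by norm_num [cross_apply, vec3_dotProduct, cons_val_two])
lemma ptE_not_le_lineAB : ¬ (ptE F).1 ≤ (lineAB F).1 :=
  point_le_line_iff.not.2 (by norm_num [cross_apply, vec3_dotProduct, cons_val_two])

lemma ptB_ne_ptD : ptB F ≠ ptD F := point_ne_point (by norm_num [cross_apply, cons_val_two])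
lemma ptC_ne_ptD : ptC F ≠ ptD F := point_ne_point (by norm_num [cross_apply, cons_val_two])
lemma ptE_ne_ptD : ptE F ≠ ptD F := point_ne_point (by norm_num [cross_apply, cons_val_two])
lemma ptE_ne_ptC : ptE F ≠ ptC F := point_ne_point (by norm_num [cross_apply, cons_val_two])

lemma lineAB_ne_lineAC : lineAB F ≠ lineAC F :=
  fun h => ptC_not_le_lineAB F (h ▸ ptC_le_lineAC F)
lemma lineBD_ne_lineAC : lineBD F ≠ lineAC F :=
  fun h => ptB_not_le_lineAC F (h ▸ ptB_le_lineBD F)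

lemma pointsOutside_lineAB : pointsOutside (rigidSet F) (lineAB F) = {ptB F} := by
  ext p
  simp only [pointsOutside, rigidSet, Set.mem_ofPred_eq, Set.mem_singleton_iff]
  constructor
  · rintro ⟨hp, hpS⟩
    by_contra hpB
    exact hpS (Or.inl ⟨hp, hpB⟩)
  · rintro rfl
    simp [ptB_le_lineAB, ptB_not_le_lineAC, ptB_ne_ptD]

lemma pointsOutside_lineAC : pointsOutside (rigidSet F) (lineAC F) = {ptE F, ptC F} := by
  ext p
  simp only [pointsOutside, rigidSet, Set.mem_ofPred_eq, Set.mem_insert_iff,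
    Set.mem_singleton_iff]
  constructor
  · rintro ⟨hp, hpS⟩
    by_contra! hpEC
    exact hpS (Or.inr (Or.inl ⟨hp, hpEC.2, hpEC.1⟩))
  · rintro (rfl | rfl)
    · simp [ptE_le_lineAC, ptE_not_le_lineAB, ptE_ne_ptD]
    · simp [ptC_le_lineAC, ptC_not_le_lineAB, ptC_ne_ptD]

variable {F}

lemma three_le_encard_pointsOutside (hF : 5 ≤ ENat.card F) {l : Line F} (hAB : l ≠ lineAB F)
    (hAC : l ≠ lineAC F) : 3 ≤ (pointsOutside (rigidSet F) l).encard := by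
  have hmeet : ∀ {m : Line F}, l ≠ m → {p : Point F | p.1 ≤ l.1 ∧ p.1 ≤ m.1}.encard ≤ 1 :=
    fun hm => Set.encard_le_one_iff.2 fun p q hp hq => Point.eq_of_le hm hp.1 hp.2 hq.1 hq.2
  have hsub : {p : Point F | p.1 ≤ l.1} ⊆ pointsOutside (rigidSet F) l ∪
      ({p | p.1 ≤ l.1 ∧ p.1 ≤ (lineAB F).1} ∪ {p | p.1 ≤ l.1 ∧ p.1 ≤ (lineAC F).1} ∪
        {ptD F}) := by
    intro p hp
    by_cases hpS : p ∈ rigidSet F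
    · rcases hpS with ⟨h, -⟩ | ⟨h, -⟩ | rfl
      · exact Or.inr (Or.inl (Or.inl ⟨hp, h⟩))
      · exact Or.inr (Or.inl (Or.inr ⟨hp, h⟩))
      · exact Or.inr (Or.inr rfl)
    · exact Or.inl ⟨hp, hpS⟩
  have key : (3 : ℕ∞) + 3 ≤ (pointsOutside (rigidSet F) l).encard + 3 := calc
    (3 : ℕ∞) + 3 = 5 + 1 := by norm_num
    _ ≤ ENat.card F + 1 := add_le_add hF le_rfl
    _ ≤ {p : Point F | p.1 ≤ l.1}.encard := l.card_add_one_le_encard_points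
    _ ≤ _ := Set.encard_le_encard hsub
    _ ≤ (pointsOutside (rigidSet F) l).encard + (1 + 1 + 1) := by
      refine (Set.encard_union_le _ _).trans (add_le_add le_rfl ?_)
      refine (Set.encard_union_le _ _).trans (add_le_add ?_ (Set.encard_singleton _).le)
      exact (Set.encard_union_le _ _).trans (add_le_add (hmeet hAB) (hmeet hAC))
    _ = _ := by norm_num
  exact (ENat.add_le_add_iff_right (by decide)).1 key

lemma encard_pointsOutside_eq_one_iff (hF : 5 ≤ ENat.card F) {l : Line F} :
    (pointsOutside (rigidSet F) l).encard = 1 ↔ l = lineAB F := by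
  refine ⟨fun h => ?_, fun h => by rw [h, pointsOutside_lineAB, Set.encard_singleton]⟩
  by_contra hAB
  by_cases hAC : l = lineAC F
  · rw [hAC, pointsOutside_lineAC, Set.encard_pair (ptE_ne_ptC F)] at h
    norm_num at h
  · have h3 := three_le_encard_pointsOutside hF hAB hAC
    rw [h] at h3
    norm_num at h3

lemma encard_pointsOutside_eq_two_iff (hF : 5 ≤ ENat.card F) {l : Line F} :
    (pointsOutside (rigidSet F) l).encard = 2 ↔ l = lineAC F := by
  refine ⟨fun h => ?_, fun h => by rw [h, pointsOutside_lineAC, Set.encard_pair (ptE_ne_ptC F)]⟩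
  by_contra hAC
  by_cases hAB : l = lineAB F
  · rw [hAB, pointsOutside_lineAB, Set.encard_singleton] at h
    norm_num at h
  · have h3 := three_le_encard_pointsOutside hF hAB hAC
    rw [h] at h3
    norm_num at h3

theorem isRigid_rigidSet (hF5 : 5 ≤ ENat.card F) (hF : Function.Surjective (Nat.cast : ℕ → F)) :
    IsRigid (rigidSet F) := by
  intro g h hc hg hS
  have hcount := hc.encard_pointsOutside_apply hg hS
  have hAB : h (lineAB F) = lineAB F := (encard_pointsOutside_eq_one_iff hF5).1 <| by
    rw [hcount, (encard_pointsOutside_eq_one_iff hF5).2 rfl]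
  have hAC : h (lineAC F) = lineAC F := (encard_pointsOutside_eq_two_iff hF5).1 <| by
    rw [hcount, (encard_pointsOutside_eq_two_iff hF5).2 rfl]
  have hA : g (ptA F) = ptA F :=
    hc.apply_point_eq_self (lineAB_ne_lineAC F) hAB hAC (ptA_le_lineAB F) (ptA_le_lineAC F)
  have hB : g (ptB F) = ptB F := by
    have := hc.image_pointsOutside hg hS (lineAB F)
    rwa [hAB, pointsOutside_lineAB, Set.image_singleton, Set.singleton_eq_singleton_iff] at this
  have hD : g (ptD F) = ptD F := by
    rcases (hS _).2 (Or.inr (Or.inr rfl) : ptD F ∈ rigidSet F) with ⟨hle, -⟩ | ⟨hle, -⟩ | hD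
    · exact absurd ((hc _ _).1 (by rwa [hAB])) (ptD_not_le_lineAB F)
    · exact absurd ((hc _ _).1 (by rwa [hAC])) (ptD_not_le_lineAC F)
    · exact hD
  have hBD : h (lineBD F) = lineBD F :=
    hc.apply_line_eq_self (ptB_ne_ptD F) hB hD (ptB_le_lineBD F) (ptD_le_lineBD F)
  have hE : g (ptE F) = ptE F :=
    hc.apply_point_eq_self (lineBD_ne_lineAC F) hBD hAC (ptE_le_lineBD F) (ptE_le_lineAC F)
  have hC : g (ptC F) = ptC F := by
    have hCout : g (ptC F) ∈ pointsOutside (rigidSet F) (lineAC F) := by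
      rw [← hAC, ← hc.image_pointsOutside hg hS, pointsOutside_lineAC]
      exact Set.mem_image_of_mem g (by simp)
    rw [pointsOutside_lineAC] at hCout
    rcases hCout with hCE | hCC
    · exact absurd (hg.1 (hCE.trans hE.symm)) (ptE_ne_ptC F).symm
    · exact hCC
  exact hc.eq_self_of_fixes_frame hF (fixes_of_apply_point_eq hA) (fixes_of_apply_point_eq hB)
    (fixes_of_apply_point_eq hC) (fixes_of_apply_point_eq hD)

lemma exists_collineation_ne : ∃ (G : Point F ≃ Point F) (H : Line F ≃ Line F),
    IsCollineation G H ∧ ∃ p, G p ≠ p := by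
  let e := LinearEquiv.funCongrLeft F F (Equiv.swap (0 : Fin 3) 1)
  refine ⟨SubspaceDim.map e 1, SubspaceDim.map e 2, isCollineation_map e, ptA F, fun h => ?_⟩
  have hmem : e ![1, 0, 0] ∈ (SubspaceDim.map e 1 (ptA F)).1 :=
    Submodule.mem_map_of_mem (mem_span_singleton_self _)
  rw [h] at hmem
  obtain ⟨c, hc⟩ := mem_span_singleton.1 hmem
  simpa [e] using congrFun hc 1

end Rigidity

end ProjPlane
namespace LeviTensor

open ProjPlane

variable {F : Type*} [Field F] {r s : ℕ}

lemma isGraphAutomorphism_sumCongr {G : Point F ≃ Point F} {H : Line F ≃ Line F}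
    (hc : IsCollineation G H) (π : Point F → Equiv.Perm (Fin r))
    (ρ : Line F → Equiv.Perm (Fin s)) :
    IsGraphAutomorphism (LeviTensor F r s)
      (Equiv.sumCongr (Equiv.prodShear G π) (Equiv.prodShear H ρ)) := by
  rintro (⟨p, i⟩ | ⟨l, j⟩) (⟨p', i'⟩ | ⟨l', j'⟩)
  · exact Iff.rfl
  · exact hc p l'
  · exact hc p' l
  · exact Iff.rfl

lemma _root_.IsGraphAutomorphism.isCollineation
    {σ : Equiv.Perm ((Point F × Fin r) ⊕ (Line F × Fin s))}
    (hσ : IsGraphAutomorphism (LeviTensor F r s) σ) {g : Point F → Point F}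
    {h : Line F → Line F} {i : Fin r} {j : Fin s} (hg : ∀ p, σ (.inl (p, i)) = .inl (g p, i))
    (hh : ∀ l, σ (.inr (l, j)) = .inr (h l, j)) : IsCollineation g h := fun p l => by
  have := hσ (.inl (p, i)) (.inr (l, j))
  rwa [hg, hh] at this

section Upper

def vertexIndex : (Point F × Fin r) ⊕ (Line F × Fin s) → Fin r ⊕ Fin s :=
  Sum.map Prod.snd Prod.snd

lemma exists_eq_of_vertexIndex {σ : Equiv.Perm ((Point F × Fin r) ⊕ (Line F × Fin s))}
    (hσ : ∀ v, vertexIndex (σ v) = vertexIndex v) :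
    ∃ (g : Fin r → Point F → Point F) (h : Fin s → Line F → Line F),
      (∀ p i, σ (.inl (p, i)) = .inl (g i p, i)) ∧ ∀ l j, σ (.inr (l, j)) = .inr (h j l, j) := by
  have hP : ∀ i (p : Point F), ∃ p', σ (.inl (p, i)) = .inl (p', i) := by
    intro i p
    have := hσ (.inl (p, i))
    rcases hv : σ (.inl (p, i)) with ⟨p', i'⟩ | ⟨l', j'⟩ <;> simp [hv, vertexIndex] at this
    exact ⟨p', by rw [this]⟩
  have hL : ∀ j (l : Line F), ∃ l', σ (.inr (l, j)) = .inr (l', j) := by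
    intro j l
    have := hσ (.inr (l, j))
    rcases hv : σ (.inr (l, j)) with ⟨p', i'⟩ | ⟨l', j'⟩ <;> simp [hv, vertexIndex] at this
    exact ⟨l', by rw [this]⟩
  choose g hg using hP
  choose h hh using hL
  exact ⟨g, h, fun p i => hg i p, fun l j => hh j l⟩

open scoped Classical in
noncomputable def markedColor (S : Set (Point F)) :
    (Point F × Fin r) ⊕ (Line F × Fin s) → Option (Fin r ⊕ Fin s)
  | .inl (p, i) => if i.val = 0 ∧ p ∈ S then none else some (.inl i)
  | .inr (_, j) => some (.inr j)

noncomputable def markedColoring (S : Set (Point F)) :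
    (LeviTensor F r s).Coloring (Option (Fin r ⊕ Fin s)) :=
  SimpleGraph.Coloring.mk (markedColor S) <| by
    rintro (⟨p, i⟩ | ⟨l, j⟩) (⟨p', i'⟩ | ⟨l', j'⟩) h
    · exact h.elim
    · simp only [markedColor]
      split_ifs <;> simp
    · simp only [markedColor]
      split_ifs <;> simp
    · exact h.elim

lemma markedColoring_apply (S : Set (Point F)) (v : (Point F × Fin r) ⊕ (Line F × Fin s)) :
    markedColoring S v = markedColor S v :=
  rfl

lemma vertexIndex_eq_of_markedColor_eq {S : Set (Point F)}
    {v w : (Point F × Fin r) ⊕ (Line F × Fin s)} (h : markedColor S v = markedColor S w) :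
    vertexIndex v = vertexIndex w := by
  rcases v with ⟨p, i⟩ | ⟨l, j⟩ <;> rcases w with ⟨p', i'⟩ | ⟨l', j'⟩ <;>
    simp only [markedColor] at h <;> (try split_ifs at h) <;> simp_all [vertexIndex, Fin.ext_iff]

lemma markedColor_inl_eq_iff {S : Set (Point F)} {p p' : Point F} {i : Fin r} (hi : i.val = 0) :
    markedColor (s := s) S (.inl (p, i)) = markedColor S (.inl (p', i)) ↔ (p ∈ S ↔ p' ∈ S) := by
  simp only [markedColor, hi, true_and]
  split_ifs <;> simp_all

theorem isDistinguishing_markedColoring [Finite F] (hr : 0 < r) (hs : 0 < s)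
    {S : Set (Point F)} (hS : IsRigid S) :
    IsDistinguishing (LeviTensor F r s) (markedColoring S) := by
  intro σ hσ hcol
  obtain ⟨g, h, hg, hh⟩ :=
    exists_eq_of_vertexIndex fun v => vertexIndex_eq_of_markedColor_eq (by
      simpa only [markedColoring_apply] using hcol v)
  let i₀ : Fin r := ⟨0, hr⟩
  let j₀ : Fin s := ⟨0, hs⟩
  have hc : ∀ i j, IsCollineation (g i) (h j) := fun i j => hσ.isCollineation (hg · i) (hh · j)
  have hg₀ : ∀ p, g i₀ p = p := by
    refine hS _ _ (hc i₀ j₀) (hc i₀ j₀).injective.bijective_of_finite fun p => ?_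
    have := hcol (.inl (p, i₀))
    rw [hg, markedColoring_apply, markedColoring_apply] at this
    exact (markedColor_inl_eq_iff rfl).1 this
  have hh₀ : ∀ j l, h j l = l := fun j l =>
    Line.eq_of_forall_le_iff fun p => by rw [← hc i₀ j p l, hg₀]
  have hg' : ∀ i p, g i p = p := fun i p =>
    Point.eq_of_forall_le_iff fun l => by rw [← hc i j₀ p l, hh₀]
  ext (⟨p, i⟩ | ⟨l, j⟩) <;> simp [hg, hh, hg', hh₀]

end Upper

section Lower

lemma exists_perm_comp_eq {ι β : Type*} [Fintype ι] [DecidableEq β] {f f' : ι → β}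
    (hf : Function.Injective f) (hf' : Function.Injective f')
    (h : Finset.univ.image f = Finset.univ.image f') : ∃ e : Equiv.Perm ι, ∀ i, f' (e i) = f i := by
  have hr : Set.range f = Set.range f' := by
    simpa [Set.image_univ] using congrArg ((↑) : Finset β → Set β) h
  exact ⟨(Equiv.ofInjective f hf).trans ((Equiv.setCongr hr).trans (Equiv.ofInjective f' hf').symm),
    fun i => Equiv.apply_ofInjective_symm hf' _⟩

variable {α : Type*} {C : (LeviTensor F r s).Coloring α}

lemma injective_pointColor (hC : IsDistinguishing _ C) (p : Point F) :
    Function.Injective fun i => C (.inl (p, i)) := fun i i' h => by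
  simpa using hC.eq_of_color_eq h (by rintro (_ | _) <;> exact Iff.rfl)

lemma injective_lineColor (hC : IsDistinguishing _ C) (l : Line F) :
    Function.Injective fun j => C (.inr (l, j)) := fun j j' h => by
  simpa using hC.eq_of_color_eq h (by rintro (_ | _) <;> exact Iff.rfl)

variable [DecidableEq α] (C)

def pointColors (p : Point F) : Finset α := Finset.univ.image fun i => C (.inl (p, i))

def lineColors (l : Line F) : Finset α := Finset.univ.image fun j => C (.inr (l, j))

variable {C}

lemma disjoint_pointColors_lineColors {p : Point F} {l : Line F} (hpl : p.1 ≤ l.1) :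
    Disjoint (pointColors C p) (lineColors C l) := by
  simp only [pointColors, lineColors, Finset.disjoint_left, Finset.mem_image, Finset.mem_univ,
    true_and]
  rintro _ ⟨i, rfl⟩ ⟨j, hj⟩
  exact C.valid (show (LeviTensor F r s).Adj (.inl (p, i)) (.inr (l, j)) from hpl) hj.symm

variable [Fintype α]

lemma isCompl_pointColors_lineColors (hC : IsDistinguishing _ C) (hα : Fintype.card α ≤ r + s)
    {p : Point F} {l : Line F} (hpl : p.1 ≤ l.1) : IsCompl (pointColors C p) (lineColors C l) := by
  refine ⟨disjoint_pointColors_lineColors hpl, codisjoint_iff.2 (Finset.eq_univ_of_card _ ?_)⟩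
  refine (Finset.card_le_univ _).antisymm ?_
  rw [Finset.sup_eq_union, Finset.card_union_of_disjoint (disjoint_pointColors_lineColors hpl),
    pointColors, lineColors, Finset.card_image_of_injective _ (injective_pointColor hC p),
    Finset.card_image_of_injective _ (injective_lineColor hC l)]
  simpa using hα

lemma pointColors_eq (hC : IsDistinguishing _ C) (hα : Fintype.card α ≤ r + s) (p q : Point F) :
    pointColors C p = pointColors C q := by
  rcases eq_or_ne p q with rfl | hpq
  · rfl
  let l : Line F := ⟨p.1 ⊔ q.1, Point.finrank_sup hpq⟩
  exact compl_injective
    ((isCompl_pointColors_lineColors hC hα (l := l) le_sup_left).compl_eq.trans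
      (isCompl_pointColors_lineColors hC hα (l := l) le_sup_right).compl_eq.symm)

lemma lineColors_eq (hC : IsDistinguishing _ C) (hα : Fintype.card α ≤ r + s) (l m : Line F) :
    lineColors C l = lineColors C m := by
  obtain ⟨p, hp⟩ := l.exists_point
  obtain ⟨q, hq⟩ := m.exists_point
  rw [← (isCompl_pointColors_lineColors hC hα hp).compl_eq,
    ← (isCompl_pointColors_lineColors hC hα hq).compl_eq, pointColors_eq hC hα p q]

theorem le_card_of_isDistinguishing (hr : 0 < r) (hC : IsDistinguishing (LeviTensor F r s) C) :
    r + s + 1 ≤ Fintype.card α := by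
  by_contra! hα
  replace hα : Fintype.card α ≤ r + s := by omega
  obtain ⟨G, H, hc, p, hp⟩ := exists_collineation_ne (F := F)
  choose π hπ using fun q => exists_perm_comp_eq (injective_pointColor hC q)
    (injective_pointColor hC (G q)) (pointColors_eq hC hα q (G q))
  choose ρ hρ using fun l => exists_perm_comp_eq (injective_lineColor hC l)
    (injective_lineColor hC (H l)) (lineColors_eq hC hα l (H l))
  have hσ := hC _ (isGraphAutomorphism_sumCongr hc π ρ) <| by
    rintro (⟨q, i⟩ | ⟨l, j⟩)
    exacts [hπ q i, hρ l j]
  have := Equiv.ext_iff.1 hσ (.inl (p, ⟨0, hr⟩))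
  simp only [Equiv.sumCongr_apply, Sum.map_inl, Equiv.prodShear_apply, Equiv.Perm.coe_one,
    id_eq, Sum.inl.injEq, Prod.mk.injEq] at this
  exact hp this.1

end Lower

end LeviTensor

/-- For a prime `q ≥ 5` and integers `r, s ≥ 2`, the distinguishing chromatic number
of `LG_q ⊗ K_{r,s}` equals `r + s + 1`. -/
theorem stmt16 (q : ℕ) (hq : Nat.Prime q) (hq5 : 5 ≤ q) (r s : ℕ) (hr : 2 ≤ r) (hs : 2 ≤ s)
    (F : Type) [Field F] [Fintype F] (hF : Fintype.card F = q) :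
    distChromNum (LeviTensor F r s) = r + s + 1 := by
  have hF5 : 5 ≤ ENat.card F := by simp [ENat.card_eq_coe_fintype_card, hF, hq5]
  have hC := LeviTensor.isDistinguishing_markedColoring (r := r) (s := s) (by omega) (by omega)
    (ProjPlane.isRigid_rigidSet hF5 (natCast_surjective_of_card_eq_prime hq hF))
  rw [distChromNum_eq_card hC fun n C hC' => by
    simpa using LeviTensor.le_card_of_isDistinguishing (by omega) hC']
  simp
end
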